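/- arXiv:2406.17395 — 7 statements merged into one kernel-verified Lean document; each statement's English description precedes it below -/
import Mathlib

section
/- Let Γ ∈ 𝒢₃(θ0,θ1,θ2). Then θ1 ≥ 0 and θ2 ≤ −√2. -/
/-- `θ` is an eigenvalue of the (real) adjacency matrix of `G`. -/
def adjEig {V : Type} [Fintype V] [DecidableEq V] (G : SimpleGraph V) [DecidableRel G.Adj]
    (θ : ℝ) : Prop :=
  ∃ f : V → ℝ, f ≠ 0 ∧ (SimpleGraph.adjMatrix ℝ G).mulVec f = θ • f

/-- `Γ ∈ 𝒢₃(θ0,θ1,θ2)`: `Γ` is connected and the set of eigenvalues of its adjacency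
matrix is exactly `{θ0, θ1, θ2}`, where `θ0 > θ1 > θ2`. -/
def InG3 {V : Type} [Fintype V] [DecidableEq V] (G : SimpleGraph V) [DecidableRel G.Adj]
    (θ0 θ1 θ2 : ℝ) : Prop :=
  G.Connected ∧ θ1 < θ0 ∧ θ2 < θ1 ∧ {θ : ℝ | adjEig G θ} = {θ0, θ1, θ2}

/-!
Expanding in an orthonormal eigenbasis of the adjacency matrix `A`, the Rayleigh quotient
`xᵀAx / xᵀx` lies between the least and the largest eigenvalue. A complete graph has only the
eigenvalues `-1` and `n - 1`, so a connected `Γ` with three eigenvalues contains an induced path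
`a ∼ b ∼ w`.

The test vector `e_a - √2 e_b + e_w` has Rayleigh quotient `-√2`, whence `θ2 ≤ -√2`.

For `θ1`, Perron–Frobenius: if `f` is a `θ0`-eigenvector then so is `|f|` (its Rayleigh quotient
can only grow), and a nonnegative eigenvector of a connected graph vanishing at one vertex
vanishes everywhere. So `θ0`-eigenvectors have no zeros, and the `θ0`-eigenspace is a line. Some
nonzero `x` supported on the non-edge `{a, w}` is orthogonal to it, and then
`0 = xᵀAx ≤ θ1 xᵀx`.
-/

open Matrix

section Eigenbasis

variable {V ι : Type*} [Fintype V] [Fintype ι] [DecidableEq ι]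

structure IsOrthonormalEigenbasis (A : Matrix V V ℝ) (B : ι → V → ℝ) (μ : ι → ℝ) : Prop where
  mulVec_eq : ∀ i, A *ᵥ B i = μ i • B i
  orthonormal : ∀ i j, B i ⬝ᵥ B j = if i = j then 1 else 0
  sum_smul : ∀ x, ∑ i, (B i ⬝ᵥ x) • B i = x

theorem Matrix.IsHermitian.exists_isOrthonormalEigenbasis [DecidableEq V] {A : Matrix V V ℝ}
    (hA : A.IsHermitian) : ∃ (B : V → V → ℝ) (μ : V → ℝ), IsOrthonormalEigenbasis A B μ := by
  have inner_eq (i : V) (x : V → ℝ) :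
      inner ℝ (hA.eigenvectorBasis i) (WithLp.toLp 2 x) = ⇑(hA.eigenvectorBasis i) ⬝ᵥ x := by
    simp [PiLp.inner_apply, dotProduct, mul_comm]
  refine ⟨fun i => ⇑(hA.eigenvectorBasis i), hA.eigenvalues, ⟨hA.mulVec_eigenvectorBasis, ?_, ?_⟩⟩
  · intro i j
    simpa [← inner_eq] using orthonormal_iff_ite.mp hA.eigenvectorBasis.orthonormal i j
  · intro x
    have h := congrArg WithLp.ofLp (hA.eigenvectorBasis.sum_repr' (WithLp.toLp 2 x))
    simpa only [inner_eq, WithLp.ofLp_sum, WithLp.ofLp_smul] using h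

namespace IsOrthonormalEigenbasis

variable {A : Matrix V V ℝ} {B : ι → V → ℝ} {μ : ι → ℝ} (hB : IsOrthonormalEigenbasis A B μ)
include hB

theorem ne_zero (i : ι) : B i ≠ 0 := by
  intro h
  simpa [h] using hB.orthonormal i i

theorem dotProduct_eq_sum (x y : V → ℝ) : x ⬝ᵥ y = ∑ i, (B i ⬝ᵥ x) * (B i ⬝ᵥ y) := by
  conv_lhs => rw [← hB.sum_smul y]
  simp only [dotProduct_sum, dotProduct_smul, smul_eq_mul]
  exact Finset.sum_congr rfl fun i _ => by rw [dotProduct_comm x (B i), mul_comm]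

theorem dotProduct_mulVec (i : ι) (x : V → ℝ) : B i ⬝ᵥ (A *ᵥ x) = μ i * (B i ⬝ᵥ x) := by
  conv_lhs => rw [← hB.sum_smul x]
  simp [mulVec_sum, mulVec_smul, hB.mulVec_eq, dotProduct_sum, hB.orthonormal, mul_comm]

theorem dotProduct_mulVec_self (x : V → ℝ) :
    x ⬝ᵥ (A *ᵥ x) = ∑ i, μ i * (B i ⬝ᵥ x) ^ 2 := by
  rw [hB.dotProduct_eq_sum]
  exact Finset.sum_congr rfl fun i _ => by rw [hB.dotProduct_mulVec]; ring

theorem dotProduct_self (x : V → ℝ) : x ⬝ᵥ x = ∑ i, (B i ⬝ᵥ x) ^ 2 := by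
  rw [hB.dotProduct_eq_sum]
  exact Finset.sum_congr rfl fun i _ => (sq _).symm

theorem le_dotProduct_mulVec {s : ℝ} (hs : ∀ i, s ≤ μ i) (x : V → ℝ) :
    s * (x ⬝ᵥ x) ≤ x ⬝ᵥ (A *ᵥ x) := by
  rw [hB.dotProduct_mulVec_self, hB.dotProduct_self, Finset.mul_sum]
  exact Finset.sum_le_sum fun i _ => mul_le_mul_of_nonneg_right (hs i) (sq_nonneg _)

theorem dotProduct_mulVec_le {s : ℝ} {x : V → ℝ} (hs : ∀ i, B i ⬝ᵥ x = 0 ∨ μ i ≤ s) :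
    x ⬝ᵥ (A *ᵥ x) ≤ s * (x ⬝ᵥ x) := by
  rw [hB.dotProduct_mulVec_self, hB.dotProduct_self, Finset.mul_sum]
  refine Finset.sum_le_sum fun i _ => ?_
  rcases hs i with h | h
  · simp [h]
  · exact mul_le_mul_of_nonneg_right h (sq_nonneg _)

theorem mulVec_eq_sum (x : V → ℝ) : A *ᵥ x = ∑ i, (μ i * (B i ⬝ᵥ x)) • B i := by
  conv_lhs => rw [← hB.sum_smul (A *ᵥ x)]
  simp only [hB.dotProduct_mulVec]

theorem mulVec_eq_smul_of_dotProduct_mulVec_eq {t : ℝ} (ht : ∀ i, μ i ≤ t) {x : V → ℝ}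
    (hx : x ⬝ᵥ (A *ᵥ x) = t * (x ⬝ᵥ x)) : A *ᵥ x = t • x := by
  have hsum : ∑ i, (t - μ i) * (B i ⬝ᵥ x) ^ 2 = 0 := by
    simp only [sub_mul, Finset.sum_sub_distrib, ← Finset.mul_sum, ← hB.dotProduct_self,
      ← hB.dotProduct_mulVec_self, hx, sub_self]
  have hterm := (Finset.sum_eq_zero_iff_of_nonneg fun i _ =>
    mul_nonneg (sub_nonneg.2 (ht i)) (sq_nonneg (B i ⬝ᵥ x))).mp hsum
  conv_rhs => rw [← hB.sum_smul x, Finset.smul_sum]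
  rw [hB.mulVec_eq_sum]
  refine Finset.sum_congr rfl fun i hi => ?_
  rcases mul_eq_zero.mp (hterm i hi) with h | h
  · rw [sub_eq_zero.mp h, smul_smul]
  · simp [pow_eq_zero_iff two_ne_zero |>.mp h]

end IsOrthonormalEigenbasis

end Eigenbasis

theorem Matrix.eq_smul_of_mulVec_eq_smul {V : Type*} [Fintype V] {A : Matrix V V ℝ} {t : ℝ}
    {a : V} (ha : ∀ f, f ≠ 0 → A *ᵥ f = t • f → f a ≠ 0) {f p : V → ℝ} (hf : A *ᵥ f = t • f)
    (hp : A *ᵥ p = t • p) (hpa : p a ≠ 0) : f = (f a / p a) • p := by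
  by_contra hne
  refine ha (f - (f a / p a) • p) (sub_ne_zero.mpr hne) ?_ ?_
  · rw [mulVec_sub, mulVec_smul, hf, hp, smul_sub, smul_comm]
  · simp [div_mul_cancel₀ _ hpa]

section

variable {V ι R : Type*} [Fintype V] [Fintype ι] [DecidableEq V] [CommSemiring R]

theorem Matrix.sum_single_dotProduct_mulVec (A : Matrix V V R) (v : ι → V) (c : ι → R) :
    (∑ k, Pi.single (v k) (c k)) ⬝ᵥ (A *ᵥ ∑ k, Pi.single (v k) (c k)) =
      c ⬝ᵥ (A.submatrix v v *ᵥ c) := by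
  have hA (k l : ι) : Pi.single (v k) (c k) ⬝ᵥ (A *ᵥ Pi.single (v l) (c l)) =
      c k * (A (v k) (v l) * c l) := by
    rw [single_dotProduct, mulVec_single]; simp
  simp only [mulVec_sum, dotProduct_sum, sum_dotProduct, hA]
  rw [Finset.sum_comm]
  simp [dotProduct, mulVec, Finset.mul_sum]

theorem Matrix.sum_single_dotProduct_self [DecidableEq ι] {v : ι → V} (hv : v.Injective)
    (c : ι → R) :
    (∑ k, Pi.single (v k) (c k)) ⬝ᵥ (∑ k, Pi.single (v k) (c k)) = c ⬝ᵥ c := by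
  simpa [submatrix_one _ hv] using Matrix.sum_single_dotProduct_mulVec (1 : Matrix V V R) v c

end

namespace SimpleGraph

theorem Connected.exists_induced_path_of_ne_top {V : Type*} {G : SimpleGraph V}
    (hG : G.Connected) (hne : G ≠ ⊤) :
    ∃ a b w, G.Adj a b ∧ G.Adj b w ∧ a ≠ w ∧ ¬G.Adj a w := by
  obtain ⟨a, c, hac, hnac⟩ := ne_top_iff_exists_not_adj.mp hne
  obtain ⟨p⟩ := hG.preconnected a c
  obtain ⟨d, -, hd₁, hd₂⟩ := p.exists_boundary_dart {v | v = a ∨ G.Adj a v} (.inl rfl)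
    (by simp [Ne.symm hac, hnac])
  simp only [Set.mem_ofPred_eq, not_or] at hd₁ hd₂
  rcases hd₁ with h | h
  · exact absurd (h ▸ d.adj) hd₂.2
  · exact ⟨a, d.fst, d.snd, h, d.adj, Ne.symm hd₂.1, hd₂.2⟩

section

variable {V : Type*} [Fintype V] {G : SimpleGraph V} [DecidableRel G.Adj]
  {ι : Type*} [Fintype ι] [DecidableEq ι] {B : ι → V → ℝ} {μ : ι → ℝ}

theorem Connected.eq_zero_of_mulVec_eq_smul_of_nonneg (hG : G.Connected) {f : V → ℝ} {t : ℝ}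
    (hf : G.adjMatrix ℝ *ᵥ f = t • f) (hf₀ : 0 ≤ f) {v : V} (hv : f v = 0) : f = 0 := by
  have hzero : ∀ u w, G.Adj u w → f u = 0 → f w = 0 := by
    intro u w huw hu
    have h := congrFun hf u
    rw [adjMatrix_mulVec_apply, Pi.smul_apply, hu, smul_zero] at h
    exact (Finset.sum_eq_zero_iff_of_nonneg fun x _ => hf₀ x).mp h w (by simpa using huw)
  funext u
  obtain ⟨p⟩ := hG.preconnected v u
  induction p with
  | nil => exact hv
  | cons h _ ih => exact ih (hzero _ _ h hv)

theorem Connected.apply_ne_zero_of_mulVec_eq_smul (hG : G.Connected)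
    (hB : IsOrthonormalEigenbasis (G.adjMatrix ℝ) B μ) {t : ℝ} (ht : ∀ i, μ i ≤ t) {f : V → ℝ}
    (hf₀ : f ≠ 0) (hf : G.adjMatrix ℝ *ᵥ f = t • f) (v : V) : f v ≠ 0 := by
  set A := G.adjMatrix ℝ
  set g : V → ℝ := fun v => |f v|
  have hA (u w : V) : 0 ≤ A u w := by
    simp only [A, adjMatrix_apply]
    split <;> norm_num
  have hgg : g ⬝ᵥ g = f ⬝ᵥ f := by simp only [g, dotProduct, abs_mul_abs_self]
  have hfg : f ⬝ᵥ (A *ᵥ f) ≤ g ⬝ᵥ (A *ᵥ g) := by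
    simp only [dotProduct, mulVec, Finset.mul_sum]
    refine Finset.sum_le_sum fun u _ => Finset.sum_le_sum fun w _ => ?_
    calc f u * (A u w * f w) ≤ |f u * (A u w * f w)| := le_abs_self _
      _ = g u * (A u w * g w) := by rw [abs_mul, abs_mul, abs_of_nonneg (hA u w)]
  have hg : A *ᵥ g = t • g := by
    refine hB.mulVec_eq_smul_of_dotProduct_mulVec_eq ht (le_antisymm ?_ ?_)
    · exact hB.dotProduct_mulVec_le fun i => .inr (ht i)
    · rwa [hgg, ← smul_eq_mul, ← dotProduct_smul, ← hf]
  intro hv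
  have hg₀ := hG.eq_zero_of_mulVec_eq_smul_of_nonneg hg (fun u => abs_nonneg (f u))
    (abs_eq_zero.mpr hv)
  exact hf₀ (funext fun u => abs_eq_zero.mp (congrFun hg₀ u))

end

section

variable {V : Type} [Fintype V] [DecidableEq V] {G : SimpleGraph V} [DecidableRel G.Adj]
  {ι : Type*} [Fintype ι] [DecidableEq ι] {B : ι → V → ℝ} {μ : ι → ℝ}

theorem eq_neg_one_or_eq_card_sub_one_of_adjEig_of_eq_top (hG : G = ⊤) {θ : ℝ}
    (hθ : adjEig G θ) : θ = -1 ∨ θ = Fintype.card V - 1 := by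
  obtain ⟨f, hf₀, hf⟩ := hθ
  have key (v : V) : (θ + 1) * f v = ∑ u, f u := by
    have hN : G.neighborFinset v = {v}ᶜ := by ext u; simp [hG, eq_comm]
    have h := congrFun hf v
    rw [adjMatrix_mulVec_apply, hN, Pi.smul_apply, smul_eq_mul] at h
    rw [← Finset.sum_compl_add_sum {v}, h, Finset.sum_singleton]
    ring
  refine or_iff_not_imp_left.mpr fun hθ => ?_
  have hθ' : θ + 1 ≠ 0 := fun h => hθ (by linarith)
  obtain ⟨v, hv⟩ := Function.ne_iff.mp hf₀
  have hconst (u : V) : f u = f v := mul_left_cancel₀ hθ' ((key u).trans (key v).symm)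
  have hsum : ∑ u, f u = Fintype.card V * f v := by simp [hconst]
  have hcard := mul_right_cancel₀ hv ((key v).trans hsum)
  linarith

theorem le_neg_sqrt_two_of_induced_path (hB : IsOrthonormalEigenbasis (G.adjMatrix ℝ) B μ)
    {s : ℝ} (hs : ∀ i, s ≤ μ i) {a b w : V} (hab : G.Adj a b) (hbw : G.Adj b w) (haw : a ≠ w)
    (hnaw : ¬G.Adj a w) : s ≤ -√2 := by
  set v : Fin 3 → V := ![a, b, w]
  set c : Fin 3 → ℝ := ![1, -√2, 1]
  have hv : v.Injective := by
    intro i j h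
    fin_cases i <;> fin_cases j <;> simp_all [v, G.ne_of_adj hab, G.ne_of_adj hbw]
  set x : V → ℝ := ∑ k, Pi.single (v k) (c k)
  have hq : x ⬝ᵥ (G.adjMatrix ℝ *ᵥ x) = -4 * √2 := by
    rw [sum_single_dotProduct_mulVec]
    simp only [dotProduct, mulVec, submatrix_apply, adjMatrix_apply, ite_mul, one_mul, zero_mul,
      Fin.sum_univ_three, cons_val_zero, cons_val_one, cons_val, SimpleGraph.irrefl, ↓reduceIte,
      hab, hab.symm, hbw, hbw.symm, hnaw, mt Adj.symm hnaw, zero_add, add_zero, mul_neg, neg_mul,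
      c, v]
    ring
  have hn : x ⬝ᵥ x = 4 := by
    rw [sum_single_dotProduct_self hv]
    simp only [dotProduct, Fin.sum_univ_three, cons_val_zero, cons_val_one, cons_val, mul_one,
      mul_neg, neg_mul, neg_neg, Real.mul_self_sqrt zero_le_two, c]
    norm_num
  have hray := hB.le_dotProduct_mulVec hs x
  rw [hq, hn] at hray
  linarith

theorem Connected.nonneg_of_eigenvalue_le_of_not_adj (hG : G.Connected)
    (hB : IsOrthonormalEigenbasis (G.adjMatrix ℝ) B μ) {t s : ℝ} (ht : ∀ i, μ i ≤ t)
    (hts : ∀ i, μ i = t ∨ μ i ≤ s) (htG : adjEig G t) {a w : V} (haw : a ≠ w)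
    (hnaw : ¬G.Adj a w) : 0 ≤ s := by
  obtain ⟨p, hp₀, hp⟩ := htG
  have hperron {f : V → ℝ} (hf₀ : f ≠ 0) (hf : G.adjMatrix ℝ *ᵥ f = t • f) : ∀ v, f v ≠ 0 :=
    hG.apply_ne_zero_of_mulVec_eq_smul hB ht hf₀ hf
  set v : Fin 2 → V := ![a, w]
  set c : Fin 2 → ℝ := ![p w, -p a]
  have hv : v.Injective := by
    intro i j h
    fin_cases i <;> fin_cases j <;> simp_all [v]
  set x : V → ℝ := ∑ k, Pi.single (v k) (c k)
  have hq : x ⬝ᵥ (G.adjMatrix ℝ *ᵥ x) = 0 := by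
    rw [sum_single_dotProduct_mulVec]
    simp [v, c, dotProduct, mulVec, Fin.sum_univ_two, adjMatrix_apply, hnaw, mt Adj.symm hnaw]
  have hn : 0 < x ⬝ᵥ x := by
    rw [sum_single_dotProduct_self hv]
    simp only [c, dotProduct, Fin.sum_univ_two]
    simpa using add_pos_of_nonneg_of_pos (mul_self_nonneg (p w))
      (mul_self_pos.mpr (hperron hp₀ hp a))
  have hpx : p ⬝ᵥ x = 0 := by
    simp only [Fin.sum_univ_two, cons_val_zero, cons_val_one, dotProduct_add, dotProduct_single,
      x, v, c]
    ring
  -- Every `t`-eigenvector is a multiple of `p`, and `x ⊥ p`.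
  have hBx (i : ι) : B i ⬝ᵥ x = 0 ∨ μ i ≤ s := by
    refine (hts i).imp (fun hi => ?_) id
    rw [eq_smul_of_mulVec_eq_smul (f := B i) (fun f hf₀ hf => hperron hf₀ hf a)
      (hi ▸ hB.mulVec_eq i) hp (hperron hp₀ hp a), smul_dotProduct, hpx, smul_zero]
  have hray := hB.dotProduct_mulVec_le hBx
  rw [hq] at hray
  nlinarith

end

end SimpleGraph

open SimpleGraph in
/-- If `Γ ∈ 𝒢₃(θ0,θ1,θ2)` then `θ1 ≥ 0` and `θ2 ≤ -√2`. -/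
theorem stmt1 {V : Type} [Fintype V] [DecidableEq V] (G : SimpleGraph V) [DecidableRel G.Adj]
    (θ0 θ1 θ2 : ℝ) (h : InG3 G θ0 θ1 θ2) :
    0 ≤ θ1 ∧ θ2 ≤ -Real.sqrt 2 := by
  obtain ⟨hconn, h01, h12, hspec⟩ := h
  have hθ (θ : ℝ) : adjEig G θ ↔ θ = θ0 ∨ θ = θ1 ∨ θ = θ2 := by
    simpa using Set.ext_iff.mp hspec θ
  have hG : G ≠ ⊤ := by
    intro hG
    have hK (θ : ℝ) (hθ' : θ = θ0 ∨ θ = θ1 ∨ θ = θ2) :=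
      eq_neg_one_or_eq_card_sub_one_of_adjEig_of_eq_top hG ((hθ θ).2 hθ')
    rcases hK θ0 (by simp) with h0 | h0 <;> rcases hK θ1 (by simp) with h1 | h1 <;>
      rcases hK θ2 (by simp) with h2 | h2 <;> linarith
  obtain ⟨a, b, w, hab, hbw, haw, hnaw⟩ := hconn.exists_induced_path_of_ne_top hG
  obtain ⟨B, μ, hB⟩ := (G.isHermitian_adjMatrix ℝ).exists_isOrthonormalEigenbasis
  have hμ (i : V) : μ i = θ0 ∨ μ i = θ1 ∨ μ i = θ2 :=
    (hθ _).1 ⟨B i, hB.ne_zero i, hB.mulVec_eq i⟩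
  have hle (i : V) : μ i ≤ θ0 := by rcases hμ i with h | h | h <;> linarith
  have hge (i : V) : θ2 ≤ μ i := by rcases hμ i with h | h | h <;> linarith
  have hgap (i : V) : μ i = θ0 ∨ μ i ≤ θ1 := by
    rcases hμ i with h | h | h
    exacts [.inl h, .inr h.le, .inr (by linarith)]
  exact ⟨hconn.nonneg_of_eigenvalue_le_of_not_adj hB hle hgap ((hθ θ0).2 (.inl rfl)) haw hnaw,
    le_neg_sqrt_two_of_induced_path hB hge hab hbw haw hnaw⟩
end

section
/- Let Γ ∈ 𝒢₃(θ0,θ1,θ2) with adjacency matrix A. Then there exists a function α from the vertex set of Γ to the real numbers with α_x > 0 for every vertex x, such that A·α = θ0·α, such that A² − (θ1+θ2)·A + θ1·θ2·I equals the rank-one matrix whose (x,y) entry is α_x·α_y, and such that for every vertex x the degree of x equals α_x² − θ1·θ2. -/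
open Matrix SimpleGraph

lemma Matrix.mem_spectrum_iff_exists_mulVec_eq_smul {n K : Type*} [Fintype n] [DecidableEq n]
    [Field K] {A : Matrix n n K} {μ : K} :
    μ ∈ spectrum K A ↔ ∃ v, v ≠ 0 ∧ A *ᵥ v = μ • v := by
  rw [← spectrum_toLin', ← Module.End.hasEigenvalue_iff_mem_spectrum,
    Module.End.hasEigenvalue_iff, Submodule.ne_bot_iff]
  simp [and_comm]

lemma sub_smul_one_mul_sub_smul_one {R A : Type*} [CommRing R] [Ring A] [Algebra R A]
    (a : A) (r s : R) : (a - r • 1) * (a - s • 1) = a * a - (r + s) • a + (r * s) • 1 := by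
  simp only [mul_sub, sub_mul, mul_smul_comm, smul_mul_assoc, mul_one, one_mul]
  module

lemma sub_mul_sub_mul_sub_eq_zero_of_spectrum_subset {A : Type*} [Ring A] [StarRing A]
    [TopologicalSpace A] [Algebra ℝ A] [ContinuousFunctionalCalculus ℝ A IsSelfAdjoint]
    {a : A} (ha : IsSelfAdjoint a) {r s t : ℝ} (h : spectrum ℝ a ⊆ {r, s, t}) :
    (a - r • 1) * (a - s • 1) * (a - t • 1) = 0 := by
  simp only [← Algebra.algebraMap_eq_smul_one]
  have hvanish : cfc (fun x : ℝ => (x - r) * (x - s) * (x - t)) a = cfc (0 : ℝ → ℝ) a := by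
    refine cfc_congr fun x hx => ?_
    rcases h hx with rfl | rfl | rfl <;> simp
  rwa [cfc_zero, cfc_mul _ _ a, cfc_mul _ _ a, cfc_sub _ _ a, cfc_sub _ _ a, cfc_sub _ _ a,
    cfc_id' ℝ a, cfc_const r a, cfc_const s a, cfc_const t a] at hvanish

open scoped MatrixOrder ComplexOrder in
lemma Matrix.IsHermitian.posSemidef_smul_one_sub_of_spectrum_le {n 𝕜 : Type*} [Fintype n]
    [DecidableEq n] [RCLike 𝕜] {A : Matrix n n 𝕜} (hA : A.IsHermitian) {c : ℝ}
    (h : ∀ x ∈ spectrum ℝ A, x ≤ c) : (c • (1 : Matrix n n 𝕜) - A).PosSemidef := by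
  rw [← Algebra.algebraMap_eq_smul_one]
  exact Matrix.le_iff.mp (le_algebraMap_of_spectrum_le h hA)

lemma Matrix.mulVec_transpose_apply {n R : Type*} [Fintype n] [NonUnitalNonAssocSemiring R]
    (A B : Matrix n n R) (y : n) : A *ᵥ Bᵀ y = (A * B)ᵀ y :=
  rfl

lemma Matrix.exists_eq_smul_vecMulVec_of_transpose_eq {n K : Type*} [Field K]
    {B : Matrix n n K} (hB : Bᵀ = B) {u : n → K} (hu : ∀ x, u x ≠ 0)
    (hcol : ∀ y, ∃ c : K, Bᵀ y = c • u) : ∃ t : K, B = t • vecMulVec u u := by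
  choose c hc using hcol
  have hB_apply (x y : n) : B x y = c y * u x := by simpa using congrFun (hc y) x
  rcases isEmpty_or_nonempty n with _ | ⟨⟨x₀⟩⟩
  · exact ⟨0, Matrix.ext fun x => isEmptyElim x⟩
  refine ⟨c x₀ / u x₀, Matrix.ext fun x y => ?_⟩
  have hsymm (x y : n) : c y * u x = c x * u y := by
    rw [← hB_apply, ← hB_apply, ← transpose_apply B, hB]
  have := hsymm x₀ y
  simp only [smul_apply, vecMulVec_apply, smul_eq_mul, hB_apply]
  field_simp [hu x₀]
  linear_combination u x * this

lemma Matrix.exists_pos_eq_vecMulVec_smul {n : Type*} [Fintype n] {B : Matrix n n ℝ}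
    (hB : Bᵀ = B) {u : n → ℝ} (hu : ∀ x, 0 < u x) (hcol : ∀ y, ∃ c : ℝ, Bᵀ y = c • u)
    {μ : ℝ} (hμ : 0 < μ) (hBu : B *ᵥ u = μ • u) :
    ∃ s : ℝ, 0 < s ∧ B = vecMulVec (s • u) (s • u) := by
  rcases isEmpty_or_nonempty n with _ | ⟨⟨x₀⟩⟩
  · exact ⟨1, one_pos, Subsingleton.elim _ _⟩
  obtain ⟨t, rfl⟩ := exists_eq_smul_vecMulVec_of_transpose_eq hB (fun x => (hu x).ne') hcol
  have hnorm : 0 < u ⬝ᵥ u :=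
    Finset.sum_pos (fun x _ => mul_pos (hu x) (hu x)) ⟨x₀, Finset.mem_univ x₀⟩
  have htμ : t * (u ⬝ᵥ u) = μ := by
    rw [smul_mulVec, vecMulVec_mulVec, op_smul_eq_smul, smul_smul] at hBu
    exact smul_left_injective ℝ (fun h => (hu x₀).ne' (congrFun h x₀)) hBu
  have ht : 0 < t := pos_of_mul_pos_left (htμ ▸ hμ) hnorm.le
  refine ⟨√t, Real.sqrt_pos.mpr ht, ?_⟩
  rw [smul_vecMulVec, vecMulVec_smul, smul_smul, Real.mul_self_sqrt ht.le]

namespace SimpleGraph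

variable {V : Type} [Fintype V] {G : SimpleGraph V} [DecidableRel G.Adj] {f : V → ℝ} {θ : ℝ}

lemma apply_eq_zero_of_adj_of_nonneg_eigenvector (hf₀ : 0 ≤ f)
    (hf : G.adjMatrix ℝ *ᵥ f = θ • f) {x y : V} (hxy : G.Adj x y) (hx : f x = 0) : f y = 0 := by
  have hsum : ∑ z ∈ G.neighborFinset x, f z = 0 := by
    rw [← adjMatrix_mulVec_apply, hf, Pi.smul_apply, hx, smul_zero]
  exact (Finset.sum_eq_zero_iff_of_nonneg fun z _ => hf₀ z).mp hsum y
    ((mem_neighborFinset G x y).mpr hxy)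

lemma eq_zero_of_nonneg_eigenvector (hG : G.Connected) (hf₀ : 0 ≤ f)
    (hf : G.adjMatrix ℝ *ᵥ f = θ • f) {x : V} (hx : f x = 0) : f = 0 := by
  funext y
  obtain ⟨w⟩ := hG.preconnected x y
  induction w with
  | nil => exact hx
  | cons hadj _ ih => exact ih (apply_eq_zero_of_adj_of_nonneg_eigenvector hf₀ hf hadj hx)

lemma pos_of_nonneg_eigenvector (hG : G.Connected) (hf₀ : 0 ≤ f) (hf_ne : f ≠ 0)
    (hf : G.adjMatrix ℝ *ᵥ f = θ • f) (x : V) : 0 < f x :=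
  (hf₀ x).lt_of_ne fun hx => hf_ne (eq_zero_of_nonneg_eigenvector hG hf₀ hf hx.symm)

lemma dotProduct_adjMatrix_mulVec_le_abs (f : V → ℝ) :
    f ⬝ᵥ G.adjMatrix ℝ *ᵥ f ≤ |f| ⬝ᵥ G.adjMatrix ℝ *ᵥ |f| := by
  simp only [dotProduct_mulVec_adjMatrix, Pi.abs_apply]
  gcongr with x _ y _
  split_ifs
  · rw [← abs_mul]; exact le_abs_self _
  · rfl

variable [DecidableEq V]

/-- Since `θ` is the top of the spectrum, `|f|` attains the maximum `θ` of the Rayleigh quotient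
as soon as `f` does, and a maximiser lies in the kernel of the semidefinite form `θ - A`. -/
lemma adjMatrix_mulVec_abs (hθ : (θ • 1 - G.adjMatrix ℝ).PosSemidef)
    (hf : G.adjMatrix ℝ *ᵥ f = θ • f) : G.adjMatrix ℝ *ᵥ |f| = θ • |f| := by
  set A := G.adjMatrix ℝ
  have hsub (g : V → ℝ) : (θ • 1 - A) *ᵥ g = θ • g - A *ᵥ g := by
    rw [sub_mulVec, smul_mulVec, one_mulVec]
  have hnorm : |f| ⬝ᵥ |f| = f ⬝ᵥ f := by simp [dotProduct, abs_mul_abs_self]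
  have hform : |f| ⬝ᵥ (θ • 1 - A) *ᵥ |f| = 0 := by
    refine le_antisymm ?_ (by simpa using hθ.dotProduct_mulVec_nonneg |f|)
    have := dotProduct_adjMatrix_mulVec_le_abs (G := G) f
    rw [hf, dotProduct_smul] at this
    rw [hsub, dotProduct_sub, dotProduct_smul, hnorm]
    simpa using this
  have := (hθ.dotProduct_mulVec_zero_iff |f|).mp (by simpa using hform)
  rw [hsub, sub_eq_zero] at this
  exact this.symm

lemma eq_smul_of_pos_eigenvector (hG : G.Connected) (hθ : (θ • 1 - G.adjMatrix ℝ).PosSemidef)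
    {u : V → ℝ} (hu₀ : ∀ x, 0 < u x) (hu : G.adjMatrix ℝ *ᵥ u = θ • u)
    (hf : G.adjMatrix ℝ *ᵥ f = θ • f) : ∃ c : ℝ, f = c • u := by
  obtain ⟨x₀⟩ := hG.nonempty
  set c := f x₀ / u x₀
  refine ⟨c, sub_eq_zero.mp ?_⟩
  have hw : G.adjMatrix ℝ *ᵥ (f - c • u) = θ • (f - c • u) := by
    rw [mulVec_sub, mulVec_smul, hf, hu, smul_sub, smul_comm]
  have hx₀ : |f - c • u| x₀ = 0 := by
    simp [c, div_mul_cancel₀ _ (hu₀ x₀).ne']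
  have := eq_zero_of_nonneg_eigenvector hG (abs_nonneg _) (adjMatrix_mulVec_abs hθ hw) hx₀
  exact funext fun x => abs_eq_zero.mp (congrFun this x)

lemma exists_pos_eigenvector (hG : G.Connected) (hθ : (θ • 1 - G.adjMatrix ℝ).PosSemidef)
    (h : adjEig G θ) : ∃ u : V → ℝ, (∀ x, 0 < u x) ∧ G.adjMatrix ℝ *ᵥ u = θ • u := by
  obtain ⟨f, hf_ne, hf⟩ := h
  exact ⟨|f|, pos_of_nonneg_eigenvector hG (abs_nonneg f) (by simpa using hf_ne)
    (adjMatrix_mulVec_abs hθ hf), adjMatrix_mulVec_abs hθ hf⟩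

lemma exists_pos_eq_vecMulVec_of_adjMatrix_mul_eq_smul (hG : G.Connected)
    (hθ : (θ • 1 - G.adjMatrix ℝ).PosSemidef) {u : V → ℝ} (hu₀ : ∀ x, 0 < u x)
    (hu : G.adjMatrix ℝ *ᵥ u = θ • u) {B : Matrix V V ℝ} (hB : Bᵀ = B)
    (hAB : G.adjMatrix ℝ * B = θ • B) {μ : ℝ} (hμ : 0 < μ) (hBu : B *ᵥ u = μ • u) :
    ∃ s : ℝ, 0 < s ∧ B = vecMulVec (s • u) (s • u) :=
  exists_pos_eq_vecMulVec_smul hB hu₀ (fun y => eq_smul_of_pos_eigenvector hG hθ hu₀ hu <| by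
    rw [mulVec_transpose_apply, hAB, transpose_smul]; rfl) hμ hBu

lemma spectrum_adjMatrix (G : SimpleGraph V) [DecidableRel G.Adj] :
    spectrum ℝ (G.adjMatrix ℝ) = {θ | adjEig G θ} :=
  Set.ext fun _ => mem_spectrum_iff_exists_mulVec_eq_smul

end SimpleGraph

/-- If `Γ ∈ 𝒢₃(θ0,θ1,θ2)` with adjacency matrix `A`, then there is a positive
Perron eigenvector `α` for `θ0` with
`A² - (θ1+θ2)A + θ1θ2 I = α αᵀ`, and the degree of each vertex `x` is `α x ^ 2 - θ1 θ2`. -/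
theorem stmt2 {V : Type} [Fintype V] [DecidableEq V] (G : SimpleGraph V) [DecidableRel G.Adj]
    (θ0 θ1 θ2 : ℝ) (h : InG3 G θ0 θ1 θ2) :
    ∃ α : V → ℝ, (∀ x, 0 < α x) ∧
      (SimpleGraph.adjMatrix ℝ G).mulVec α = θ0 • α ∧
      SimpleGraph.adjMatrix ℝ G * SimpleGraph.adjMatrix ℝ G
        - (θ1 + θ2) • SimpleGraph.adjMatrix ℝ G
        + (θ1 * θ2) • (1 : Matrix V V ℝ) = Matrix.vecMulVec α α ∧
      ∀ x : V, (G.degree x : ℝ) = α x ^ 2 - θ1 * θ2 := by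
  obtain ⟨hG, h01, h12, hspec⟩ := h
  set A := G.adjMatrix ℝ
  have hA : A.IsHermitian := G.isHermitian_adjMatrix ℝ
  have hσ : spectrum ℝ A = {θ0, θ1, θ2} := G.spectrum_adjMatrix.trans hspec
  have hθ0 : (θ0 • 1 - A).PosSemidef := hA.posSemidef_smul_one_sub_of_spectrum_le <| by
    rw [hσ]; rintro x (rfl | rfl | rfl) <;> linarith
  obtain ⟨u, hu₀, hu⟩ : ∃ u : V → ℝ, (∀ x, 0 < u x) ∧ A *ᵥ u = θ0 • u :=
    exists_pos_eigenvector hG hθ0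
      (hspec ▸ Set.mem_insert θ0 {θ1, θ2} : θ0 ∈ {θ | adjEig G θ})
  set B := A * A - (θ1 + θ2) • A + (θ1 * θ2) • (1 : Matrix V V ℝ)
  have hB : B = (A - θ1 • 1) * (A - θ2 • 1) := (sub_smul_one_mul_sub_smul_one A θ1 θ2).symm
  have hAB : A * B = θ0 • B := by
    have := sub_mul_sub_mul_sub_eq_zero_of_spectrum_subset (a := A) hA hσ.subset
    rwa [mul_assoc, ← hB, sub_mul, sub_eq_zero, smul_mul_assoc, one_mul] at this
  have hBu : B *ᵥ u = ((θ0 - θ1) * (θ0 - θ2)) • u := by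
    have hshift (c : ℝ) : (A - c • 1) *ᵥ u = (θ0 - c) • u := by
      rw [sub_mulVec, smul_mulVec, one_mulVec, hu, sub_smul]
    rw [hB, ← mulVec_mulVec, hshift, mulVec_smul, hshift, smul_smul, mul_comm]
  obtain ⟨s, hs, hBs⟩ := exists_pos_eq_vecMulVec_of_adjMatrix_mul_eq_smul hG hθ0 hu₀ hu
    (by simp [B, A, G.transpose_adjMatrix]) hAB (mul_pos (by linarith) (by linarith)) hBu
  refine ⟨s • u, fun x => mul_pos hs (hu₀ x), by rw [mulVec_smul, hu, smul_comm], hBs, fun x => ?_⟩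
  have hdiag : B x x = G.degree x + θ1 * θ2 := by simp [B, A, G.adjMatrix_mul_self_apply_self]
  have := congrFun (congrFun hBs x) x
  rw [hdiag, vecMulVec_apply] at this
  rw [sq]
  linarith
end

section
/- Let Γ ∈ 𝒢₃(θ0,θ1,θ2) have v vertices and suppose Γ is k-regular for a natural number k. Then (k:ℝ) = θ0, and there exist natural numbers a and c with (a:ℝ) = θ0 − 1 + (θ1+1)·(θ2+1) and (c:ℝ) = θ0 + θ1·θ2 such that Γ is strongly regular with parameters (v, k, a, c), i.e. every two adjacent vertices have exactly a common neighbours and every two distinct non-adjacent vertices have exactly c common neighbours. -/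
/-!
Write `A` for the adjacency matrix. Since `A` is symmetric, the spectral theorem gives
`(A - θ₀)(A - θ₁)(A - θ₂) = 0`. The all-ones vector has eigenvalue `k`, and `|θ| ≤ k` for every
eigenvalue, so `k = θ₀`. Hence every column of `B = (A - θ₁)(A - θ₂)` lies in the `k`-eigenspace,
which for a connected `k`-regular graph consists of constant vectors (maximum principle). Reading
off the diagonal, `B = (k + θ₁θ₂) J`, so off the diagonal
`A² = (θ₁ + θ₂) A + (k + θ₁θ₂) J`: the number of common neighbours of two distinct vertices
depends only on whether they are adjacent. Both kinds of pairs occur, since `k > 0` and a complete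
graph has only the eigenvalues `k` and `-1`.
-/

open Matrix Finset

theorem Matrix.IsHermitian.mul_mul_eq_zero_of_spectrum_subset {n : Type*} [Fintype n]
    [DecidableEq n] {A : Matrix n n ℝ} (hA : A.IsHermitian) {a b c : ℝ}
    (hspec : spectrum ℝ A ⊆ {a, b, c}) :
    (A - a • 1) * ((A - b • 1) * (A - c • 1)) = 0 := by
  have : IsSelfAdjoint A := hA
  have hcfc : cfc (fun x : ℝ => (x - a) * ((x - b) * (x - c))) A
      = (A - a • 1) * ((A - b • 1) * (A - c • 1)) := by
    rw [cfc_mul .., cfc_mul .., cfc_sub .., cfc_sub .., cfc_sub .., cfc_id' .., cfc_const ..,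
      cfc_const .., cfc_const ..]
    simp only [Algebra.algebraMap_eq_smul_one]
  rw [← hcfc, ← cfc_zero ℝ A]
  refine cfc_congr fun x hx => ?_
  rcases hspec hx with rfl | rfl | rfl <;> simp

namespace SimpleGraph

section Spectrum

variable {V : Type} [Fintype V] {G : SimpleGraph V} [DecidableRel G.Adj] {k : ℕ}

theorem adjEig_iff_mem_spectrum [DecidableEq V] {θ : ℝ} :
    adjEig G θ ↔ θ ∈ spectrum ℝ (G.adjMatrix ℝ) := by
  rw [← spectrum_toLin', ← Module.End.hasEigenvalue_iff_mem_spectrum]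
  constructor
  · rintro ⟨f, hf0, hf⟩
    exact Module.End.hasEigenvalue_of_hasEigenvector ⟨Module.End.mem_eigenspace_iff.2 hf, hf0⟩
  · intro h
    obtain ⟨f, hf, hf0⟩ := h.exists_hasEigenvector
    exact ⟨f, hf0, Module.End.mem_eigenspace_iff.1 hf⟩

theorem IsRegularOfDegree.adjEig_natCast [DecidableEq V] [Nonempty V]
    (hreg : G.IsRegularOfDegree k) : adjEig G k := by
  refine ⟨Function.const V 1, Function.const_ne_zero.2 one_ne_zero, funext fun x => ?_⟩
  simp [hreg x]

theorem IsRegularOfDegree.abs_le_of_adjEig [DecidableEq V] (hreg : G.IsRegularOfDegree k)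
    {θ : ℝ} (hθ : adjEig G θ) : |θ| ≤ k := by
  obtain ⟨f, hf0, hf⟩ := hθ
  obtain ⟨y, hy⟩ := Function.ne_iff.mp hf0
  obtain ⟨x, -, hx⟩ := exists_max_image univ (fun a => |f a|) ⟨y, mem_univ y⟩
  have hfx : 0 < |f x| := (abs_pos.2 hy).trans_le (hx y (mem_univ y))
  refine le_of_mul_le_mul_right ?_ hfx
  calc |θ| * |f x| = |∑ u ∈ G.neighborFinset x, f u| := by
        rw [← abs_mul, ← adjMatrix_mulVec_apply, hf, Pi.smul_apply, smul_eq_mul]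
    _ ≤ ∑ u ∈ G.neighborFinset x, |f u| := abs_sum_le_sum_abs _ _
    _ ≤ ∑ u ∈ G.neighborFinset x, |f x| := sum_le_sum fun u _ => hx u (mem_univ u)
    _ = k * |f x| := by rw [sum_const, card_neighborFinset_eq_degree, hreg x, nsmul_eq_mul]

theorem Connected.eq_of_adjMatrix_mulVec_eq_smul (hconn : G.Connected)
    (hreg : G.IsRegularOfDegree k) {f : V → ℝ} (hf : G.adjMatrix ℝ *ᵥ f = (k : ℝ) • f)
    (x y : V) : f x = f y := by
  have : Nonempty V := hconn.nonempty
  obtain ⟨m, -, hm⟩ := exists_max_image univ f univ_nonempty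
  have hle : ∀ a, f a ≤ f m := fun a => hm a (mem_univ a)
  -- `k f a` is the sum of the `k` values at the neighbours of `a`, all of them at most `f m`
  have hstep : ∀ a b, G.Adj a b → f a = f m → f b = f m := by
    intro a b hab ha
    by_contra hb
    have hlt : ∑ u ∈ G.neighborFinset a, f u < ∑ _u ∈ G.neighborFinset a, f m :=
      sum_lt_sum (fun u _ => hle u) ⟨b, (G.mem_neighborFinset a b).2 hab, (hle b).lt_of_ne hb⟩
    rw [← adjMatrix_mulVec_apply, hf, sum_const, card_neighborFinset_eq_degree, hreg a,
      Pi.smul_apply, ha, nsmul_eq_mul, smul_eq_mul] at hlt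
    exact hlt.false
  have hwalk : ∀ a b (w : G.Walk a b), f a = f m → f b = f m := by
    intro a b w
    induction w with
    | nil => exact id
    | cons hadj _ ih => exact fun ha => ih (hstep _ _ hadj ha)
  have hmax : ∀ a, f a = f m := fun a => hwalk m a (hconn.preconnected m a).some rfl
  rw [hmax x, hmax y]

theorem IsRegularOfDegree.sum_eq_zero_of_adjMatrix_mulVec_eq_smul
    (hreg : G.IsRegularOfDegree k) {θ : ℝ} {f : V → ℝ} (hf : G.adjMatrix ℝ *ᵥ f = θ • f)
    (hθ : θ ≠ k) : ∑ x, f x = 0 := by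
  have hrow : (1 : V → ℝ) ᵥ* G.adjMatrix ℝ = (k : ℝ) • 1 := funext fun x => by
    simp [hreg x]
  have h := dotProduct_mulVec 1 (G.adjMatrix ℝ) f
  rw [hf, hrow, dotProduct_smul, smul_dotProduct, one_dotProduct, smul_eq_mul, smul_eq_mul] at h
  exact (mul_eq_mul_right_iff.1 h).resolve_left hθ

theorem IsRegularOfDegree.eq_neg_one_of_adjEig_of_forall_adj [DecidableEq V]
    (hreg : G.IsRegularOfDegree k) (hcomp : ∀ x y, x ≠ y → G.Adj x y) {θ : ℝ}
    (hθ : adjEig G θ) (hθk : θ ≠ k) : θ = -1 := by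
  obtain ⟨f, hf0, hf⟩ := hθ
  have hsum := hreg.sum_eq_zero_of_adjMatrix_mulVec_eq_smul hf hθk
  have hnbr : ∀ x, G.neighborFinset x = univ.erase x := fun x => by
    ext u
    simpa [eq_comm] using ⟨fun h => h.ne, hcomp x u⟩
  have hneg : θ • f = -f := by
    rw [← hf]
    ext x
    rw [adjMatrix_mulVec_apply, hnbr, sum_erase_eq_sub (mem_univ x), hsum, zero_sub, Pi.neg_apply]
  obtain ⟨y, hy⟩ := Function.ne_iff.mp hf0
  have := congrFun hneg y
  simp only [Pi.smul_apply, smul_eq_mul, Pi.neg_apply] at this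
  exact mul_right_cancel₀ hy (by rw [this, neg_one_mul])

theorem IsRegularOfDegree.exists_adj [Nonempty V] (hreg : G.IsRegularOfDegree k) (hk : 0 < k) :
    ∃ x y, G.Adj x y := by
  obtain ⟨x⟩ := ‹Nonempty V›
  exact ⟨x, (G.degree_pos_iff_exists_adj x).1 (hreg x ▸ hk)⟩

end Spectrum

section StronglyRegular

variable {V : Type} [Fintype V] [DecidableEq V] {G : SimpleGraph V} [DecidableRel G.Adj] {k : ℕ}

theorem adjMatrix_sq_apply (α : Type*) [Semiring α] (x y : V) :
    (G.adjMatrix α ^ 2) x y = Fintype.card (G.commonNeighbors x y) := by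
  rw [adjMatrix_pow_apply_eq_card_walk, @Fintype.card_congr _ _ (G.fintypeSetWalkLength x y 2) _
    (G.walkLengthTwoEquivCommonNeighbors x y)]

theorem adjMatrix_sq_apply_of_ne (hconn : G.Connected) (hreg : G.IsRegularOfDegree k)
    {θ₁ θ₂ : ℝ}
    (hann : (G.adjMatrix ℝ - (k : ℝ) • 1) *
      ((G.adjMatrix ℝ - θ₁ • 1) * (G.adjMatrix ℝ - θ₂ • 1)) = 0)
    {x y : V} (hxy : x ≠ y) :
    (G.adjMatrix ℝ ^ 2) x y = (θ₁ + θ₂) * G.adjMatrix ℝ x y + (k + θ₁ * θ₂) := by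
  set A := G.adjMatrix ℝ
  set B := (A - θ₁ • 1) * (A - θ₂ • 1)
  have hB : B = A ^ 2 - (θ₁ + θ₂) • A + (θ₁ * θ₂) • 1 := by
    simp only [B, sub_mul, mul_sub, Matrix.smul_mul, Matrix.mul_smul, one_mul, mul_one,
      smul_smul, pow_two, add_smul, mul_comm θ₂ θ₁]
    abel
  have hAB : A * B = (k : ℝ) • B := by
    rwa [sub_mul, Matrix.smul_mul, one_mul, sub_eq_zero] at hann
  have hcol : B x y = B y y :=
    hconn.eq_of_adjMatrix_mulVec_eq_smul hreg (f := fun i => B i y)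
      (funext fun i => congrFun₂ hAB i y) x y
  have hdiag : B y y = k + θ₁ * θ₂ := by
    rw [hB, pow_two, Matrix.add_apply, Matrix.sub_apply, adjMatrix_mul_self_apply_self, hreg y]
    simp [A]
  have hBxy := congrFun₂ hB x y
  simp only [Matrix.sub_apply, Matrix.add_apply, Matrix.smul_apply, smul_eq_mul,
    one_apply_ne hxy] at hBxy
  linarith

theorem exists_isSRGWith_of_adjMatrix_sq_apply {v : ℕ} (hv : Fintype.card V = v)
    (hreg : G.IsRegularOfDegree k) {α γ : ℝ}
    (hsq : ∀ x y, x ≠ y → (G.adjMatrix ℝ ^ 2) x y = α * G.adjMatrix ℝ x y + γ)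
    (hadj : ∃ x y, G.Adj x y) (hnadj : ∃ x y, x ≠ y ∧ ¬G.Adj x y) :
    ∃ a c : ℕ, (a : ℝ) = α + γ ∧ (c : ℝ) = γ ∧ G.IsSRGWith v k a c := by
  have hcard : ∀ x y, x ≠ y →
      (Fintype.card (G.commonNeighbors x y) : ℝ) = α * G.adjMatrix ℝ x y + γ := fun x y hxy => by
    rw [← adjMatrix_sq_apply, hsq x y hxy]
  have hcard_adj : ∀ x y, G.Adj x y → (Fintype.card (G.commonNeighbors x y) : ℝ) = α + γ :=
    fun x y h => by rw [hcard x y h.ne, adjMatrix_apply, if_pos h, mul_one]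
  have hcard_nadj : ∀ x y, x ≠ y → ¬G.Adj x y → (Fintype.card (G.commonNeighbors x y) : ℝ) = γ :=
    fun x y hxy h => by rw [hcard x y hxy, adjMatrix_apply, if_neg h, mul_zero, zero_add]
  obtain ⟨x₀, y₀, h₀⟩ := hadj
  obtain ⟨x₁, y₁, hne₁, h₁⟩ := hnadj
  refine ⟨_, _, hcard_adj x₀ y₀ h₀, hcard_nadj x₁ y₁ hne₁ h₁, hv, hreg, fun x y h => ?_,
    fun x y hxy h => ?_⟩
  · exact_mod_cast (hcard_adj x y h).trans (hcard_adj x₀ y₀ h₀).symm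
  · exact_mod_cast (hcard_nadj x y hxy h).trans (hcard_nadj x₁ y₁ hne₁ h₁).symm

end StronglyRegular

end SimpleGraph

/-- A regular graph in `𝒢₃(θ0,θ1,θ2)` on `v` vertices of degree `k` satisfies `k = θ0`
and is strongly regular with parameters `(v, k, θ0 - 1 + (θ1+1)(θ2+1), θ0 + θ1 θ2)`. -/
theorem stmt3 {V : Type} [Fintype V] [DecidableEq V] (G : SimpleGraph V) [DecidableRel G.Adj]
    (θ0 θ1 θ2 : ℝ) (v k : ℕ) (hv : Fintype.card V = v)
    (hreg : G.IsRegularOfDegree k) (h : InG3 G θ0 θ1 θ2) :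
    (k : ℝ) = θ0 ∧ ∃ a c : ℕ,
      (a : ℝ) = θ0 - 1 + (θ1 + 1) * (θ2 + 1) ∧
      (c : ℝ) = θ0 + θ1 * θ2 ∧
      G.IsSRGWith v k a c := by
  obtain ⟨hconn, h01, h12, hset⟩ := h
  have : Nonempty V := hconn.nonempty
  have hθ : ∀ θ ∈ ({θ0, θ1, θ2} : Set ℝ), adjEig G θ := fun θ hmem => by rwa [← hset] at hmem
  have hk0 : (k : ℝ) = θ0 := by
    have hk : (k : ℝ) ∈ ({θ0, θ1, θ2} : Set ℝ) := hset ▸ hreg.adjEig_natCast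
    have := (le_abs_self θ0).trans (hreg.abs_le_of_adjEig (hθ θ0 (by simp)))
    simp only [Set.mem_insert_iff, Set.mem_singleton_iff] at hk
    rcases hk with hk | hk | hk <;> linarith
  have hk_pos : 0 < k := by
    have := neg_abs_le θ2
    have := hreg.abs_le_of_adjEig (hθ θ2 (by simp))
    exact_mod_cast (by linarith : (0 : ℝ) < k)
  have hspec : spectrum ℝ (G.adjMatrix ℝ) = {(k : ℝ), θ1, θ2} :=
    Set.ext fun θ => by rw [← SimpleGraph.adjEig_iff_mem_spectrum, hk0, ← hset]; rfl
  have hann := (G.isHermitian_adjMatrix ℝ).mul_mul_eq_zero_of_spectrum_subset hspec.subset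
  have hnadj : ∃ x y, x ≠ y ∧ ¬G.Adj x y := by
    by_contra! hcomp
    have h1 := hreg.eq_neg_one_of_adjEig_of_forall_adj hcomp (hθ θ1 (by simp)) (by linarith)
    have h2 := hreg.eq_neg_one_of_adjEig_of_forall_adj hcomp (hθ θ2 (by simp)) (by linarith)
    linarith
  obtain ⟨a, c, ha, hc, hsrg⟩ := G.exists_isSRGWith_of_adjMatrix_sq_apply hv hreg
    (fun x y hxy => G.adjMatrix_sq_apply_of_ne hconn hreg hann hxy)
    (hreg.exists_adj hk_pos) hnadj
  exact ⟨hk0, a, c, by rw [ha, hk0]; ring, by rw [hc, hk0], hsrg⟩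
end

section
/- Let θ1 ≥ 1 and θ2 ≤ −2 be integers, and suppose that v = θ2(θ2 + θ1 + θ1·θ2 − θ2²·θ1)/(θ1+1) and b = (1 + θ1 − θ2·θ1)(θ2 + θ1 + θ1·θ2 − θ2²·θ1)/(θ2·(θ1+1)) are positive integers; set k = θ2², λ = θ1 + 1, r = θ1(1 − θ2) + 1, x = −θ2, y = 0. Suppose M is a v×b {0,1}-matrix with all row sums r and all column sums k satisfying M·Mᵀ = (r−λ)·I + λ·J, and X is a symmetric b×b {0,1}-matrix with zero diagonal, X ≠ O and X ≠ J−I, satisfying Mᵀ·M = k·I + x·X + y·(J − I − X). Then the graph on v+b vertices with block adjacency matrix [[O, M],[Mᵀ, X]] is connected, its set of adjacency eigenvalues is exactly {θ2(θ1·θ2 − θ1 − 1), θ1, θ2}, and it has coherent rank 9. -/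
open Matrix

/-- A coherent configuration of rank `r` on the finite set `V`, given as a family of
`{0,1}`-matrices `A 1, …, A r`. -/
def IsCoherentConfig {V : Type} [Fintype V] [DecidableEq V] {r : ℕ}
    (A : Fin r → Matrix V V ℝ) : Prop :=
  (∀ i x y, A i x y = 0 ∨ A i x y = 1) ∧
  (∑ i, A i) = Matrix.of (fun _ _ => (1 : ℝ)) ∧
  (∀ i, ∃ j, (A i)ᵀ = A j) ∧
  (∃ Δ : Finset (Fin r), ∑ i ∈ Δ, A i = 1) ∧
  (∀ i j, A i * A j ∈ Submodule.span ℝ (Set.range A))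

/-- The coherent rank of `G` is `n`: `n` is the least rank of a coherent configuration on
the vertex set of `G` whose real linear span contains the adjacency matrix of `G`. -/
def HasCoherentRank {V : Type} [Fintype V] [DecidableEq V] (G : SimpleGraph V)
    [DecidableRel G.Adj] (n : ℕ) : Prop :=
  IsLeast {r : ℕ | ∃ A : Fin r → Matrix V V ℝ,
    IsCoherentConfig A ∧ SimpleGraph.adjMatrix ℝ G ∈ Submodule.span ℝ (Set.range A)} n

/-!
Write `A = [[0, M], [Mᵀ, X]]`, `r = θ₁(1 - θ₂) + 1` and `u` for the vector that is `1` on points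
and `-θ₂` on blocks. The design equations `MMᵀ = -θ₁θ₂ I + (θ₁ + 1) J` and `MᵀM = θ₂² I - θ₂ X`
determine `MX`, `X²` and every product with `J`; they give
`A² - (θ₁ + θ₂) A + θ₁θ₂ I = (θ₁ + 1) u uᵀ` and `A u = θ₀ u` with `θ₀ = -θ₂ r`, so
`(A - θ₀)(A - θ₁)(A - θ₂) = 0`, and each of the three values has an explicit eigenvector.

The same equations show that splitting the blocks of `J` as `I, J - I | M, J - M | Mᵀ, J - Mᵀ |
I, X, J - I - X` gives nine `0/1`-matrices whose span is closed under products: a coherent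
configuration of rank 9 containing `A`. Conversely, the span of any coherent configuration
containing `A` is closed under products and Hadamard products. The diagonal of `A²` carries the
degrees, `r` on points and `θ₂² + θ₁θ₂(θ₂ - 1)` on blocks, which differ; this separates the two
diagonal idempotents, and cutting `J` and `A` with them recovers all nine matrices. Being nonzero
with disjoint supports, they are linearly independent, so the rank is at least 9.
-/

open Submodule Set

def allOnes (m n : Type) : Matrix m n ℝ := of fun _ _ => 1

@[simp] lemma allOnes_apply {m n : Type} (i : m) (j : n) : allOnes m n i j = 1 := rfl

@[simp] lemma transpose_allOnes (m n : Type) : (allOnes m n)ᵀ = allOnes n m := rfl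

@[simp] lemma hadamard_allOnes {m n : Type} (A : Matrix m n ℝ) : A ⊙ allOnes m n = A :=
  hadamard_of_one A

lemma fromBlocks_allOnes {k l m n : Type} :
    fromBlocks (allOnes m k) (allOnes m l) (allOnes n k) (allOnes n l)
      = allOnes (m ⊕ n) (k ⊕ l) := by
  ext (i | i) (j | j) <;> rfl

lemma vecMulVec_sumElim_const {m n : Type} (s t : ℝ) :
    vecMulVec (Sum.elim (fun _ : m => s) (fun _ : n => t)) (Sum.elim (fun _ => s) (fun _ => t))
      = fromBlocks ((s * s) • allOnes m m) ((s * t) • allOnes m n) ((t * s) • allOnes n m)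
          ((t * t) • allOnes n n) := by
  ext (i | i) (j | j) <;> simp [vecMulVec_apply]

lemma fromBlocks_hadamard_fromBlocks {k l m n : Type} (A A' : Matrix m k ℝ)
    (B B' : Matrix m l ℝ) (C C' : Matrix n k ℝ) (D D' : Matrix n l ℝ) :
    fromBlocks A B C D ⊙ fromBlocks A' B' C' D'
      = fromBlocks (A ⊙ A') (B ⊙ B') (C ⊙ C') (D ⊙ D') := by
  ext (i | i) (j | j) <;> rfl

section RowSums

variable {l m n : Type} [Fintype m]

lemma mul_allOnes_of_row_sum {N : Matrix l m ℝ} {s : ℝ} (h : ∀ i, ∑ j, N i j = s) :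
    N * allOnes m n = s • allOnes l n := by
  ext i k
  simp [mul_apply, h i]

lemma allOnes_mul_of_col_sum {N : Matrix m n ℝ} {s : ℝ} (h : ∀ j, ∑ i, N i j = s) :
    allOnes l m * N = s • allOnes l n := by
  ext k j
  simp [mul_apply, h j]

lemma allOnes_mul_allOnes : allOnes l m * allOnes m n = (Fintype.card m : ℝ) • allOnes l n :=
  mul_allOnes_of_row_sum fun _ => by simp

lemma mulVec_const_of_row_sum {N : Matrix l m ℝ} {s : ℝ} (h : ∀ i, ∑ j, N i j = s) (t : ℝ) :
    N *ᵥ (fun _ => t) = fun _ => s * t := by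
  ext i
  simp [mulVec, dotProduct, ← Finset.sum_mul, h i]

lemma mul_mem_of_mem_span {s : Set (Matrix l m ℝ)} {t : Set (Matrix m n ℝ)}
    {W : Submodule ℝ (Matrix l n ℝ)} (h : ∀ x ∈ s, ∀ y ∈ t, x * y ∈ W) {P : Matrix l m ℝ}
    {Q : Matrix m n ℝ} (hP : P ∈ span ℝ s) (hQ : Q ∈ span ℝ t) : P * Q ∈ W := by
  induction hP using span_induction with
  | mem x hx =>
    induction hQ using span_induction with
    | mem y hy => exact h x hx y hy
    | zero => simp
    | add y z _ _ hy hz => rw [Matrix.mul_add]; exact add_mem hy hz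
    | smul c y _ hy => rw [Matrix.mul_smul]; exact smul_mem _ c hy
  | zero => simp
  | add x z _ _ hx hz => rw [Matrix.add_mul]; exact add_mem hx hz
  | smul c x _ hx => rw [Matrix.smul_mul]; exact smul_mem _ c hx

end RowSums

structure IsCoherentAlgebra {V : Type} [Fintype V] [DecidableEq V]
    (W : Submodule ℝ (Matrix V V ℝ)) : Prop where
  one_mem : 1 ∈ W
  allOnes_mem : allOnes V V ∈ W
  mul_mem {x y : Matrix V V ℝ} : x ∈ W → y ∈ W → x * y ∈ W
  hadamard_mem {x y : Matrix V V ℝ} : x ∈ W → y ∈ W → x ⊙ y ∈ W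

namespace IsCoherentConfig

variable {V : Type} [Fintype V] [DecidableEq V] {r : ℕ} {A : Fin r → Matrix V V ℝ}

lemma hadamard_self (hA : IsCoherentConfig A) (i : Fin r) : A i ⊙ A i = A i := by
  ext x y
  rcases hA.1 i x y with h | h <;> simp [h]

lemma hadamard_eq_zero (hA : IsCoherentConfig A) {i j : Fin r} (hij : i ≠ j) :
    A i ⊙ A j = 0 := by
  ext x y
  have hsum : ∑ k, A k x y = 1 := by simpa [Matrix.sum_apply] using congrFun₂ hA.2.1 x y
  have hle : A i x y + A j x y ≤ ∑ k, A k x y :=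
    Finset.add_le_sum (f := fun k => A k x y)
      (fun k _ => by rcases hA.1 k x y with h | h <;> simp [h])
      (Finset.mem_univ i) (Finset.mem_univ j) hij
  rcases hA.1 i x y with h | h <;> rcases hA.1 j x y with h' | h' <;> simp [h, h'] at hle ⊢
  linarith

lemma isCoherentAlgebra_span (hA : IsCoherentConfig A) :
    IsCoherentAlgebra (span ℝ (range A)) := by
  have mem : ∀ i, A i ∈ span ℝ (range A) := fun i => subset_span ⟨i, rfl⟩
  refine ⟨?_, ?_, fun hx hy => ?_, fun hx hy => ?_⟩
  · obtain ⟨Δ, hΔ⟩ := hA.2.2.2.1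
    exact hΔ ▸ sum_mem fun i _ => mem i
  · rw [allOnes, ← hA.2.1]
    exact sum_mem fun i _ => mem i
  · have : span ℝ (range A) * span ℝ (range A) ≤ span ℝ (range A) := by
      rw [span_mul_span, span_le]
      rintro _ ⟨_, ⟨i, rfl⟩, _, ⟨j, rfl⟩, rfl⟩
      exact hA.2.2.2.2 i j
    exact this (mul_mem_mul hx hy)
  · induction hx using span_induction with
    | mem x hx =>
      obtain ⟨i, rfl⟩ := hx
      induction hy using span_induction with
      | mem y hy =>
        obtain ⟨j, rfl⟩ := hy
        rcases eq_or_ne i j with rfl | hij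
        · rw [hA.hadamard_self]; exact mem i
        · exact hA.hadamard_eq_zero hij ▸ zero_mem _
      | zero => simp
      | add y z _ _ hy hz => rw [hadamard_add]; exact add_mem hy hz
      | smul s y _ hy => rw [hadamard_smul]; exact smul_mem _ s hy
    | zero => simp
    | add y z _ _ hy hz => rw [add_hadamard]; exact add_mem hy hz
    | smul s y _ hy => rw [smul_hadamard]; exact smul_mem _ s hy

lemma linearIndependent (hA : IsCoherentConfig A) (h0 : ∀ i, A i ≠ 0) :
    LinearIndependent ℝ A := by
  rw [Fintype.linearIndependent_iff]
  intro g hg j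
  have : ∑ i, g i • (A i ⊙ A j) = g j • A j := by
    rw [Finset.sum_eq_single j (fun i _ hij => by rw [hA.hadamard_eq_zero hij, smul_zero])
      (by simp), hA.hadamard_self]
  have hj : g j • A j = 0 := by
    rw [← this, ← zero_hadamard (A j), ← hg]
    ext
    simp [Finset.sum_mul, Matrix.sum_apply, mul_assoc]
  exact (smul_eq_zero.1 hj).resolve_right (h0 j)

lemma le_of_forall_mem_span (hA : IsCoherentConfig A) (h0 : ∀ i, A i ≠ 0) {m : ℕ}
    {B : Fin m → Matrix V V ℝ} (hAB : ∀ i, A i ∈ span ℝ (range B)) : r ≤ m := by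
  classical
  have := linearIndependent_le_span_aux' A (hA.linearIndependent h0) (Finset.univ.image B)
    (by rintro _ ⟨i, rfl⟩; simpa using hAB i)
  simpa using this.trans ((Fintype.card_coe _).le.trans Finset.card_image_le)

end IsCoherentConfig

section BlockMatrices

variable {m n : Type} [Fintype m] [Fintype n]

lemma SimpleGraph.connected_of_adjMatrix_eq_fromBlocks [Nonempty m] {G : SimpleGraph (m ⊕ n)}
    [DecidableRel G.Adj] {P : Matrix m m ℝ} {M : Matrix m n ℝ} {R : Matrix n m ℝ}
    {S : Matrix n n ℝ} (hG : G.adjMatrix ℝ = fromBlocks P M R S)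
    (hMMt : ∀ i i', (M * Mᵀ) i i' ≠ 0) (hcol : ∀ j, ∑ i, M i j ≠ 0) : G.Connected := by
  have adj : ∀ i j, M i j ≠ 0 → G.Adj (.inl i) (.inr j) := fun i j hij => by
    by_contra hn
    have := congrFun₂ hG (.inl i) (.inr j)
    rw [adjMatrix_apply, if_neg hn, fromBlocks_apply₁₂] at this
    exact hij this.symm
  have reach : ∀ i i', G.Reachable (.inl i) (.inl i') := fun i i' => by
    obtain ⟨j, -, hj⟩ := Finset.exists_ne_zero_of_sum_ne_zero (hMMt i i')
    exact (adj i j (left_ne_zero_of_mul hj)).reachable.trans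
      (adj i' j (right_ne_zero_of_mul hj)).symm.reachable
  obtain ⟨i₀⟩ := ‹Nonempty m›
  refine G.connected_iff_exists_forall_reachable.2 ⟨.inl i₀, ?_⟩
  rintro (i | j)
  · exact reach i₀ i
  · obtain ⟨i, -, hi⟩ := Finset.exists_ne_zero_of_sum_ne_zero (hcol j)
    exact (reach i₀ i).trans (adj i j hi).reachable

lemma eq_or_eq_or_eq_of_mulVec_eq_smul [DecidableEq n] {A : Matrix n n ℝ} {α β γ θ : ℝ}
    (hA : (A - α • 1) * ((A - β • 1) * (A - γ • 1)) = 0) {f : n → ℝ} (hf : f ≠ 0)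
    (hθ : A *ᵥ f = θ • f) : θ = α ∨ θ = β ∨ θ = γ := by
  have shift : ∀ δ : ℝ, (A - δ • 1) *ᵥ f = (θ - δ) • f := fun δ => by
    rw [sub_mulVec, hθ, smul_mulVec, one_mulVec, sub_smul]
  have : ((θ - α) * ((θ - β) * (θ - γ))) • f = 0 :=
    calc _ = ((A - α • 1) * ((A - β • 1) * (A - γ • 1))) *ᵥ f := by
          rw [← mulVec_mulVec, ← mulVec_mulVec, shift, mulVec_smul, shift, mulVec_smul,
            mulVec_smul, shift]
          module
      _ = 0 := by rw [hA, zero_mulVec]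
  simpa [sub_eq_zero, hf] using this

lemma fromBlocks_mulVec_sumElim {A : Matrix m m ℝ} {B : Matrix m n ℝ} {C : Matrix n m ℝ}
    {D : Matrix n n ℝ} {f : m → ℝ} {g : n → ℝ} {θ : ℝ}
    (h₁ : A *ᵥ f + B *ᵥ g = θ • f) (h₂ : C *ᵥ f + D *ᵥ g = θ • g) :
    fromBlocks A B C D *ᵥ Sum.elim f g = θ • Sum.elim f g := by
  ext (i | j)
  · simpa [fromBlocks_mulVec] using congrFun h₁ i
  · simpa [fromBlocks_mulVec] using congrFun h₂ j

end BlockMatrices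

/-- `M` is the point-block incidence matrix of a quasi-symmetric 2-design with `k = θ₂²`,
`λ = θ₁ + 1`, `r = θ₁(1 - θ₂) + 1` and block intersection numbers `-θ₂` and `0`, and `X` is the
adjacency matrix of its block graph. -/
structure IsQuasiSymmetricDesign {m n : Type} [Fintype m] [Fintype n] [DecidableEq m]
    [DecidableEq n] (θ₁ θ₂ : ℝ) (M : Matrix m n ℝ) (X : Matrix n n ℝ) : Prop where
  row_sum : ∀ i, ∑ j, M i j = θ₁ * (1 - θ₂) + 1
  col_sum : ∀ j, ∑ i, M i j = θ₂ ^ 2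
  mul_transpose : M * Mᵀ = (-(θ₁ * θ₂)) • 1 + (θ₁ + 1) • allOnes m m
  transpose_mul : Mᵀ * M = θ₂ ^ 2 • 1 + (-θ₂) • X
  transpose_X : Xᵀ = X

namespace IsQuasiSymmetricDesign

variable {m n : Type} [Fintype m] [Fintype n] [DecidableEq m] [DecidableEq n]
  {θ₁ θ₂ : ℝ} {M : Matrix m n ℝ} {X : Matrix n n ℝ}

section Identities

variable (k : Type)

lemma mul_allOnes (h : IsQuasiSymmetricDesign θ₁ θ₂ M X) :
    M * allOnes n k = (θ₁ * (1 - θ₂) + 1) • allOnes m k :=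
  mul_allOnes_of_row_sum h.row_sum

lemma allOnes_mul (h : IsQuasiSymmetricDesign θ₁ θ₂ M X) :
    allOnes k m * M = θ₂ ^ 2 • allOnes k n :=
  allOnes_mul_of_col_sum h.col_sum

lemma transpose_mul_allOnes (h : IsQuasiSymmetricDesign θ₁ θ₂ M X) :
    Mᵀ * allOnes m k = θ₂ ^ 2 • allOnes n k := by
  simpa using congrArg transpose (h.allOnes_mul k)

lemma allOnes_mul_transpose (h : IsQuasiSymmetricDesign θ₁ θ₂ M X) :
    allOnes k n * Mᵀ = (θ₁ * (1 - θ₂) + 1) • allOnes k m := by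
  simpa using congrArg transpose (h.mul_allOnes k)

lemma neg_smul_X (h : IsQuasiSymmetricDesign θ₁ θ₂ M X) :
    (-θ₂) • X = Mᵀ * M - θ₂ ^ 2 • 1 := by
  rw [h.transpose_mul]; abel

lemma X_mul_allOnes (h : IsQuasiSymmetricDesign θ₁ θ₂ M X) (hθ₂ : θ₂ ≠ 0) :
    X * allOnes n k = (θ₁ * θ₂ * (θ₂ - 1)) • allOnes n k := by
  apply smul_right_injective _ (neg_ne_zero.2 hθ₂)
  dsimp only
  rw [← Matrix.smul_mul, h.neg_smul_X, Matrix.sub_mul, Matrix.mul_assoc, h.mul_allOnes,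
    Matrix.mul_smul, h.transpose_mul_allOnes, Matrix.smul_mul, Matrix.one_mul]
  module

lemma allOnes_mul_X (h : IsQuasiSymmetricDesign θ₁ θ₂ M X) (hθ₂ : θ₂ ≠ 0) :
    allOnes k n * X = (θ₁ * θ₂ * (θ₂ - 1)) • allOnes k n := by
  simpa [h.transpose_X] using congrArg transpose (h.X_mul_allOnes k hθ₂)

end Identities

lemma mul_X (h : IsQuasiSymmetricDesign θ₁ θ₂ M X) (hθ₂ : θ₂ ≠ 0) :
    M * X = (θ₁ + θ₂) • M + (-(θ₂ * (θ₁ + 1))) • allOnes m n := by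
  apply smul_right_injective _ (neg_ne_zero.2 hθ₂)
  dsimp only
  rw [← Matrix.mul_smul, h.neg_smul_X, Matrix.mul_sub, ← Matrix.mul_assoc, h.mul_transpose,
    Matrix.add_mul, Matrix.smul_mul, Matrix.smul_mul, Matrix.one_mul, h.allOnes_mul,
    Matrix.mul_smul, Matrix.mul_one]
  module

lemma X_mul_transpose (h : IsQuasiSymmetricDesign θ₁ θ₂ M X) (hθ₂ : θ₂ ≠ 0) :
    X * Mᵀ = (θ₁ + θ₂) • Mᵀ + (-(θ₂ * (θ₁ + 1))) • allOnes n m := by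
  simpa [h.transpose_X] using congrArg transpose (h.mul_X hθ₂)

lemma X_mul_X (h : IsQuasiSymmetricDesign θ₁ θ₂ M X) (hθ₂ : θ₂ ≠ 0) :
    X * X = (-(θ₂ * (θ₁ + θ₂))) • 1 + (θ₁ + 2 * θ₂) • X
      + ((θ₁ + 1) * θ₂ ^ 2) • allOnes n n := by
  apply smul_right_injective _ (neg_ne_zero.2 hθ₂)
  dsimp only
  rw [← Matrix.smul_mul, h.neg_smul_X, Matrix.sub_mul, Matrix.mul_assoc, h.mul_X hθ₂,
    Matrix.mul_add, Matrix.mul_smul, Matrix.mul_smul, h.transpose_mul, h.transpose_mul_allOnes,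
    Matrix.smul_mul, Matrix.one_mul]
  module

lemma X_row_sum (h : IsQuasiSymmetricDesign θ₁ θ₂ M X) (hθ₂ : θ₂ ≠ 0) (j : n) :
    ∑ l, X j l = θ₁ * θ₂ * (θ₂ - 1) := by
  simpa [mul_apply] using congrFun₂ (h.X_mul_allOnes Unit hθ₂) j ()

lemma transpose_row_sum (h : IsQuasiSymmetricDesign θ₁ θ₂ M X) (j : n) :
    ∑ i, Mᵀ j i = θ₂ ^ 2 :=
  h.col_sum j

lemma ne_zero [Nonempty n] (h : IsQuasiSymmetricDesign θ₁ θ₂ M X) (hθ₂ : θ₂ ≠ 0) :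
    M ≠ 0 := fun hM => by
  have := h.col_sum (Classical.arbitrary n)
  simp only [hM, Matrix.zero_apply, Finset.sum_const_zero] at this
  exact hθ₂ (pow_eq_zero_iff two_ne_zero |>.1 this.symm)

lemma ne_allOnes [Nonempty n] (h : IsQuasiSymmetricDesign θ₁ θ₂ M X)
    (hm : θ₂ ^ 2 ≠ Fintype.card m) : M ≠ allOnes m n := fun hM => by
  have := h.col_sum (Classical.arbitrary n)
  simp only [hM, allOnes_apply, Finset.sum_const, Finset.card_univ, nsmul_eq_mul,
    mul_one] at this
  exact hm this.symm

lemma connected [Nonempty m] (h : IsQuasiSymmetricDesign θ₁ θ₂ M X) (hθ₁ : 0 ≤ θ₁)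
    (hθ₂ : θ₂ < 0) {G : SimpleGraph (m ⊕ n)} [DecidableRel G.Adj]
    (hG : G.adjMatrix ℝ = fromBlocks 0 M Mᵀ X) : G.Connected := by
  refine SimpleGraph.connected_of_adjMatrix_eq_fromBlocks hG (fun i i' => ?_) (fun j => ?_)
  · rw [h.mul_transpose]
    rcases eq_or_ne i i' with rfl | hii' <;> simp [one_apply, *] <;> nlinarith
  · rw [h.col_sum]; exact pow_ne_zero 2 hθ₂.ne

lemma mulVec_eigenvector_θ₀ (h : IsQuasiSymmetricDesign θ₁ θ₂ M X) (hθ₂ : θ₂ ≠ 0) :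
    fromBlocks 0 M Mᵀ X *ᵥ Sum.elim (fun _ => 1) (fun _ => -θ₂)
      = (θ₂ * (θ₁ * θ₂ - θ₁ - 1)) • Sum.elim (fun _ => 1) (fun _ => -θ₂) := by
  apply fromBlocks_mulVec_sumElim
  · rw [zero_mulVec, zero_add, mulVec_const_of_row_sum h.row_sum]
    ext; simp; ring
  · rw [mulVec_const_of_row_sum h.transpose_row_sum, mulVec_const_of_row_sum (h.X_row_sum hθ₂)]
    ext; simp; ring

lemma mulVec_eigenvector_θ₁ (h : IsQuasiSymmetricDesign θ₁ θ₂ M X) (hθ₂ : θ₂ ≠ 0)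
    {f : m → ℝ} (hf : ∑ i, f i = 0) :
    fromBlocks 0 M Mᵀ X *ᵥ Sum.elim f ((-θ₂⁻¹) • Mᵀ *ᵥ f)
      = θ₁ • Sum.elim f ((-θ₂⁻¹) • Mᵀ *ᵥ f) := by
  have hJ : ∀ k, allOnes k m *ᵥ f = 0 := fun k => by ext; simp [mulVec, dotProduct, hf]
  apply fromBlocks_mulVec_sumElim
  · rw [zero_mulVec, zero_add, mulVec_smul, mulVec_mulVec, h.mul_transpose, add_mulVec,
      smul_mulVec, smul_mulVec, one_mulVec, hJ, smul_zero, add_zero, smul_smul]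
    congr 1; field_simp
  · rw [mulVec_smul, mulVec_mulVec, h.X_mul_transpose hθ₂, add_mulVec, smul_mulVec,
      smul_mulVec, hJ, smul_zero, add_zero, smul_smul, smul_smul]
    match_scalars
    field_simp
    ring

lemma mulVec_eigenvector_θ₂ (h : IsQuasiSymmetricDesign θ₁ θ₂ M X) (hθ₂ : θ₂ ≠ 0)
    (hr : θ₁ * (1 - θ₂) + 1 ≠ 0) :
    fromBlocks 0 M Mᵀ X *ᵥ Sum.elim (fun _ => 1) (fun _ => θ₂ / (θ₁ * (1 - θ₂) + 1))
      = θ₂ • Sum.elim (fun _ => 1) (fun _ => θ₂ / (θ₁ * (1 - θ₂) + 1)) := by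
  apply fromBlocks_mulVec_sumElim
  · rw [zero_mulVec, zero_add, mulVec_const_of_row_sum h.row_sum]
    ext; simp only [Pi.smul_apply, smul_eq_mul, mul_one]; field_simp
  · rw [mulVec_const_of_row_sum h.transpose_row_sum, mulVec_const_of_row_sum (h.X_row_sum hθ₂)]
    ext
    simp only [Pi.add_apply, Pi.smul_apply, smul_eq_mul]
    field_simp
    ring

lemma fromBlocks_mul_self (h : IsQuasiSymmetricDesign θ₁ θ₂ M X) (hθ₂ : θ₂ ≠ 0) :
    fromBlocks 0 M Mᵀ X * fromBlocks 0 M Mᵀ X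
      = (θ₁ + θ₂) • fromBlocks 0 M Mᵀ X - (θ₁ * θ₂) • 1 + (θ₁ + 1) •
          vecMulVec (Sum.elim (fun _ => 1) (fun _ => -θ₂))
            (Sum.elim (fun _ => 1) (fun _ => -θ₂)) := by
  rw [vecMulVec_sumElim_const, fromBlocks_multiply, ← fromBlocks_one, fromBlocks_smul,
    fromBlocks_smul, fromBlocks_smul, sub_eq_add_neg, fromBlocks_neg, fromBlocks_add,
    fromBlocks_add, fromBlocks_inj]
  refine ⟨?_, ?_, ?_, ?_⟩
  · rw [Matrix.zero_mul, zero_add, h.mul_transpose]; module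
  · rw [Matrix.zero_mul, zero_add, h.mul_X hθ₂]; module
  · rw [Matrix.mul_zero, zero_add, h.X_mul_transpose hθ₂]; module
  · rw [h.transpose_mul, h.X_mul_X hθ₂]; module

lemma cubic_eq_zero (h : IsQuasiSymmetricDesign θ₁ θ₂ M X) (hθ₂ : θ₂ ≠ 0) :
    (fromBlocks 0 M Mᵀ X - (θ₂ * (θ₁ * θ₂ - θ₁ - 1)) • 1)
      * ((fromBlocks 0 M Mᵀ X - θ₁ • 1) * (fromBlocks 0 M Mᵀ X - θ₂ • 1)) = 0 := by
  have hsq : (fromBlocks 0 M Mᵀ X - θ₁ • 1) * (fromBlocks 0 M Mᵀ X - θ₂ • 1)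
      = (θ₁ + 1) • vecMulVec (Sum.elim (fun _ => 1) (fun _ => -θ₂))
          (Sum.elim (fun _ => 1) (fun _ => -θ₂)) := by
    rw [Matrix.sub_mul, Matrix.mul_sub, Matrix.mul_sub, h.fromBlocks_mul_self hθ₂]
    simp only [Matrix.mul_smul, Matrix.smul_mul, Matrix.mul_one, Matrix.one_mul, smul_smul]
    module
  rw [hsq, Matrix.mul_smul, mul_vecMulVec, sub_mulVec, h.mulVec_eigenvector_θ₀ hθ₂,
    smul_mulVec, one_mulVec, sub_self]
  simp

lemma setOf_adjEig_eq (h : IsQuasiSymmetricDesign θ₁ θ₂ M X) (hθ₂ : θ₂ ≠ 0)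
    (hr : θ₁ * (1 - θ₂) + 1 ≠ 0) (hm : 1 < Fintype.card m) {G : SimpleGraph (m ⊕ n)}
    [DecidableRel G.Adj] (hG : G.adjMatrix ℝ = fromBlocks 0 M Mᵀ X) :
    {θ | adjEig G θ} = {θ₂ * (θ₁ * θ₂ - θ₁ - 1), θ₁, θ₂} := by
  obtain ⟨i, i', hii'⟩ := Fintype.exists_pair_of_one_lt_card hm
  have ne_zero : ∀ {f : m → ℝ} {g : n → ℝ}, f i ≠ 0 → Sum.elim f g ≠ 0 := fun hf hfg =>
    hf (congrFun hfg (.inl i))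
  ext θ
  refine ⟨fun ⟨f, hf, hθ⟩ => ?_, ?_⟩
  · rw [hG] at hθ
    exact eq_or_eq_or_eq_of_mulVec_eq_smul (h.cubic_eq_zero hθ₂) hf hθ
  · rintro (rfl | rfl | rfl)
    · exact ⟨_, ne_zero one_ne_zero, hG ▸ h.mulVec_eigenvector_θ₀ hθ₂⟩
    · let f : m → ℝ := Pi.single i 1 - Pi.single i' 1
      have hf : ∑ j, f j = 0 := by simp [f, Finset.sum_sub_distrib]
      exact ⟨_, ne_zero (f := f) (by simp [f, hii']), hG ▸ h.mulVec_eigenvector_θ₁ hθ₂ hf⟩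
    · exact ⟨_, ne_zero one_ne_zero, hG ▸ h.mulVec_eigenvector_θ₂ hθ₂ hr⟩

end IsQuasiSymmetricDesign

section DesignAlgebra

variable {m n : Type} [DecidableEq m] [DecidableEq n]

/-- The span of `designConfig M X`, described block by block. -/
def designAlgebra (M : Matrix m n ℝ) (X : Matrix n n ℝ) : Set (Matrix (m ⊕ n) (m ⊕ n) ℝ) :=
  {N | ∃ P ∈ span ℝ {1, allOnes m m}, ∃ Q ∈ span ℝ {M, allOnes m n},
    ∃ R ∈ span ℝ {Mᵀ, allOnes n m}, ∃ S ∈ span ℝ {1, X, allOnes n n}, N = fromBlocks P Q R S}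

def designConfig (M : Matrix m n ℝ) (X : Matrix n n ℝ) : Fin 9 → Matrix (m ⊕ n) (m ⊕ n) ℝ :=
  ![fromBlocks 1 0 0 0, fromBlocks (allOnes m m - 1) 0 0 0,
    fromBlocks 0 M 0 0, fromBlocks 0 (allOnes m n - M) 0 0,
    fromBlocks 0 0 Mᵀ 0, fromBlocks 0 0 (allOnes n m - Mᵀ) 0,
    fromBlocks 0 0 0 1, fromBlocks 0 0 0 X, fromBlocks 0 0 0 (allOnes n n - 1 - X)]

lemma designAlgebra_subset_of_generators_mem {M : Matrix m n ℝ} {X : Matrix n n ℝ}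
    {W : Submodule ℝ (Matrix (m ⊕ n) (m ⊕ n) ℝ)}
    (h₁ : ∀ P ∈ ({1, allOnes m m} : Set _), fromBlocks P 0 0 0 ∈ W)
    (h₂ : ∀ Q ∈ ({M, allOnes m n} : Set _), fromBlocks 0 Q 0 0 ∈ W)
    (h₃ : ∀ R ∈ ({Mᵀ, allOnes n m} : Set _), fromBlocks 0 0 R 0 ∈ W)
    (h₄ : ∀ S ∈ ({1, X, allOnes n n} : Set _), fromBlocks 0 0 0 S ∈ W) :
    designAlgebra M X ⊆ W := by
  have embed : ∀ {E : Type} [AddCommGroup E] [Module ℝ E] {f : E → Matrix (m ⊕ n) (m ⊕ n) ℝ}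
      (hf : IsLinearMap ℝ f) {s : Set E}, (∀ x ∈ s, f x ∈ W) → ∀ x ∈ span ℝ s, f x ∈ W :=
    fun hf _ hs _ hx => (map_span_le (hf.mk' _) _ W).2 hs (mem_map_of_mem hx)
  rintro _ ⟨P, hP, Q, hQ, R, hR, S, hS, rfl⟩
  have hsplit : fromBlocks P Q R S = fromBlocks P 0 0 0 + fromBlocks 0 Q 0 0
      + fromBlocks 0 0 R 0 + fromBlocks 0 0 0 S := by simp [fromBlocks_add]
  rw [hsplit]
  refine add_mem (add_mem (add_mem ?_ ?_) ?_) ?_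
  · exact embed ⟨fun _ _ => by simp [fromBlocks_add], fun _ _ => by simp [fromBlocks_smul]⟩
      h₁ P hP
  · exact embed ⟨fun _ _ => by simp [fromBlocks_add], fun _ _ => by simp [fromBlocks_smul]⟩
      h₂ Q hQ
  · exact embed ⟨fun _ _ => by simp [fromBlocks_add], fun _ _ => by simp [fromBlocks_smul]⟩
      h₃ R hR
  · exact embed ⟨fun _ _ => by simp [fromBlocks_add], fun _ _ => by simp [fromBlocks_smul]⟩
      h₄ S hS

lemma designConfig_mem_designAlgebra (M : Matrix m n ℝ) (X : Matrix n n ℝ) (i : Fin 9) :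
    designConfig M X i ∈ designAlgebra M X := by
  fin_cases i <;> refine ⟨_, ?_, _, ?_, _, ?_, _, ?_, rfl⟩ <;>
    repeat' first | exact zero_mem _ | apply sub_mem | exact subset_span (by simp)

lemma fromBlocks_mem_designAlgebra (M : Matrix m n ℝ) (X : Matrix n n ℝ) :
    fromBlocks 0 M Mᵀ X ∈ designAlgebra M X :=
  ⟨0, zero_mem _, M, subset_span (by simp), Mᵀ, subset_span (by simp), X, subset_span (by simp),
    rfl⟩

lemma designAlgebra_subset_span_designConfig (M : Matrix m n ℝ) (X : Matrix n n ℝ) :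
    designAlgebra M X ⊆ span ℝ (range (designConfig M X)) := by
  have mem : ∀ i, designConfig M X i ∈ span ℝ (range (designConfig M X)) :=
    fun i => subset_span ⟨i, rfl⟩
  apply designAlgebra_subset_of_generators_mem <;>
    simp only [Set.mem_insert_iff, Set.mem_singleton_iff, forall_eq_or_imp, forall_eq]
  · refine ⟨mem 0, ?_⟩
    convert add_mem (mem 0) (mem 1) using 1
    simp [designConfig, fromBlocks_add]
  · refine ⟨mem 2, ?_⟩
    convert add_mem (mem 2) (mem 3) using 1
    simp [designConfig, fromBlocks_add]
  · refine ⟨mem 4, ?_⟩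
    convert add_mem (mem 4) (mem 5) using 1
    simp [designConfig, fromBlocks_add]
  · refine ⟨mem 6, mem 7, ?_⟩
    convert add_mem (add_mem (mem 6) (mem 7)) (mem 8) using 1
    simp [designConfig, fromBlocks_add]

lemma designConfig_apply_eq_zero_or_eq_one {M : Matrix m n ℝ} {X : Matrix n n ℝ}
    (hM01 : ∀ i j, M i j = 0 ∨ M i j = 1) (hX01 : ∀ i j, X i j = 0 ∨ X i j = 1)
    (hXdiag : ∀ i, X i i = 0) (i : Fin 9) (x y : m ⊕ n) :
    designConfig M X i x y = 0 ∨ designConfig M X i x y = 1 := by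
  have one01 : ∀ {k : Type} [DecidableEq k] (x y : k),
      (1 : Matrix k k ℝ) x y = 0 ∨ (1 : Matrix k k ℝ) x y = 1 := fun x y => by
    rcases eq_or_ne x y with rfl | hxy <;> simp [one_apply, *]
  have compl01 : ∀ {t : ℝ}, t = 0 ∨ t = 1 → 1 - t = 0 ∨ 1 - t = 1 := by
    rintro _ (rfl | rfl) <;> simp
  have one_add_X01 : ∀ x y, (1 + X) x y = 0 ∨ (1 + X) x y = 1 := fun x y => by
    rcases eq_or_ne x y with rfl | hxy
    · simp [hXdiag]
    · simpa [one_apply_ne hxy] using hX01 x y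
  fin_cases i <;> rcases x with x | x <;> rcases y with y | y <;>
    simp only [designConfig, Fin.reduceFinMk, Matrix.cons_val, fromBlocks_apply₁₁,
      fromBlocks_apply₁₂, fromBlocks_apply₂₁, fromBlocks_apply₂₂, Matrix.zero_apply,
      Matrix.sub_apply, allOnes_apply, transpose_apply, sub_sub] <;>
    first
      | exact Or.inl trivial
      | exact one01 x y
      | exact compl01 (one01 x y)
      | exact hM01 _ _
      | exact compl01 (hM01 _ _)
      | exact hX01 _ _
      | exact compl01 (one_add_X01 x y)

variable [Fintype m] [Fintype n] {θ₁ θ₂ : ℝ} {M : Matrix m n ℝ} {X : Matrix n n ℝ}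

lemma IsQuasiSymmetricDesign.mul_mem_designAlgebra (h : IsQuasiSymmetricDesign θ₁ θ₂ M X)
    (hθ₂ : θ₂ ≠ 0) {N N' : Matrix (m ⊕ n) (m ⊕ n) ℝ} (hN : N ∈ designAlgebra M X)
    (hN' : N' ∈ designAlgebra M X) : N * N' ∈ designAlgebra M X := by
  obtain ⟨P, hP, Q, hQ, R, hR, S, hS, rfl⟩ := hN
  obtain ⟨P', hP', Q', hQ', R', hR', S', hS', rfl⟩ := hN'
  rw [fromBlocks_multiply]
  refine ⟨_, add_mem (mul_mem_of_mem_span ?_ hP hP') (mul_mem_of_mem_span ?_ hQ hR'),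
    _, add_mem (mul_mem_of_mem_span ?_ hP hQ') (mul_mem_of_mem_span ?_ hQ hS'),
    _, add_mem (mul_mem_of_mem_span ?_ hR hP') (mul_mem_of_mem_span ?_ hS hR'),
    _, add_mem (mul_mem_of_mem_span ?_ hR hQ') (mul_mem_of_mem_span ?_ hS hS'), rfl⟩ <;>
  simp only [Set.mem_insert_iff, Set.mem_singleton_iff, forall_eq_or_imp, forall_eq,
    Matrix.one_mul, Matrix.mul_one, allOnes_mul_allOnes, h.mul_transpose, h.transpose_mul,
    h.mul_allOnes, h.allOnes_mul, h.transpose_mul_allOnes, h.allOnes_mul_transpose,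
    h.mul_X hθ₂, h.X_mul_transpose hθ₂, h.X_mul_X hθ₂, h.X_mul_allOnes _ hθ₂,
    h.allOnes_mul_X _ hθ₂] <;>
  and_intros <;>
  repeat' first | apply add_mem | apply smul_mem | exact subset_span (by simp)

lemma IsQuasiSymmetricDesign.isCoherentConfig_designConfig
    (h : IsQuasiSymmetricDesign θ₁ θ₂ M X) (hθ₂ : θ₂ ≠ 0)
    (hM01 : ∀ i j, M i j = 0 ∨ M i j = 1) (hX01 : ∀ i j, X i j = 0 ∨ X i j = 1)
    (hXdiag : ∀ i, X i i = 0) : IsCoherentConfig (designConfig M X) := by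
  refine ⟨designConfig_apply_eq_zero_or_eq_one hM01 hX01 hXdiag, ?_,
    fun i => ⟨![0, 1, 4, 5, 2, 3, 6, 7, 8] i, ?_⟩, ⟨{0, 6}, ?_⟩, fun i j => ?_⟩
  · ext (i | i) (j | j) <;> simp [Fin.sum_univ_succ, designConfig, Matrix.sum_apply]
  · fin_cases i <;> simp [designConfig, fromBlocks_transpose, transpose_sub, h.transpose_X]
  · simp [designConfig, fromBlocks_add]
  · exact designAlgebra_subset_span_designConfig M X <| h.mul_mem_designAlgebra hθ₂
      (designConfig_mem_designAlgebra M X i) (designConfig_mem_designAlgebra M X j)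

lemma designConfig_ne_zero [Nonempty n] (hm : 1 < Fintype.card m) (hM : M ≠ 0)
    (hM' : M ≠ allOnes m n) (hX : X ≠ 0) (hX' : X ≠ allOnes n n - 1) (i : Fin 9) :
    designConfig M X i ≠ 0 := by
  obtain ⟨x, x', hxx'⟩ := Fintype.exists_pair_of_one_lt_card hm
  have : Nonempty m := ⟨x⟩
  have hJ : allOnes m m ≠ 1 := fun hJ => by simpa [hxx'] using congrFun₂ hJ x x'
  have hMt : Mᵀ ≠ 0 := fun h => hM (by simpa using congrArg transpose h)
  have hMt' : Mᵀ ≠ allOnes n m := fun h => hM' (by simpa using congrArg transpose h)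
  fin_cases i <;>
    simp [designConfig, ← fromBlocks_zero, fromBlocks_inj, sub_eq_zero, hM'.symm, hMt'.symm,
      hX'.symm, *]

end DesignAlgebra

section CoherentClosure

variable {m n : Type} [Fintype m] [Fintype n] [DecidableEq m] [DecidableEq n]
  {θ₁ θ₂ : ℝ} {M : Matrix m n ℝ} {X : Matrix n n ℝ}

lemma IsQuasiSymmetricDesign.fromBlocks_mul_self_hadamard_one
    (h : IsQuasiSymmetricDesign θ₁ θ₂ M X) (hθ₂ : θ₂ ≠ 0) (hXdiag : ∀ i, X i i = 0) :
    (fromBlocks 0 M Mᵀ X * fromBlocks 0 M Mᵀ X) ⊙ 1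
      = fromBlocks ((θ₁ * (1 - θ₂) + 1) • 1) 0 0 ((θ₂ ^ 2 + θ₁ * θ₂ * (θ₂ - 1)) • 1) := by
  rw [h.fromBlocks_mul_self hθ₂, vecMulVec_sumElim_const]
  ext (i | i) (j | j)
  · rcases eq_or_ne i j with rfl | hij <;> simp [hadamard_apply, one_apply, *]; ring
  · simp [hadamard_apply]
  · simp [hadamard_apply]
  · rcases eq_or_ne i j with rfl | hij <;> simp [hadamard_apply, one_apply, *]; ring

lemma IsCoherentAlgebra.designAlgebra_subset {W : Submodule ℝ (Matrix (m ⊕ n) (m ⊕ n) ℝ)}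
    (hW : IsCoherentAlgebra W) (h : IsQuasiSymmetricDesign θ₁ θ₂ M X) (hθ₂ : θ₂ ≠ 0)
    (hXdiag : ∀ i, X i i = 0) (hdeg : θ₁ * (1 - θ₂) + 1 ≠ θ₂ ^ 2 + θ₁ * θ₂ * (θ₂ - 1))
    (hA : fromBlocks 0 M Mᵀ X ∈ W) : designAlgebra M X ⊆ W := by
  have e₁ : fromBlocks (1 : Matrix m m ℝ) 0 0 (0 : Matrix n n ℝ) ∈ W := by
    have : (fromBlocks 0 M Mᵀ X * fromBlocks 0 M Mᵀ X) ⊙ 1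
          - (θ₂ ^ 2 + θ₁ * θ₂ * (θ₂ - 1)) • 1
        = (θ₁ * (1 - θ₂) + 1 - (θ₂ ^ 2 + θ₁ * θ₂ * (θ₂ - 1)))
          • fromBlocks (1 : Matrix m m ℝ) 0 0 (0 : Matrix n n ℝ) := by
      rw [h.fromBlocks_mul_self_hadamard_one hθ₂ hXdiag, ← fromBlocks_one, sub_eq_add_neg,
        ← neg_smul, fromBlocks_smul, fromBlocks_smul, fromBlocks_add, fromBlocks_inj]
      refine ⟨by module, by module, by module, by module⟩
    refine (smul_mem_iff _ (sub_ne_zero.2 hdeg)).1 (this ▸ sub_mem ?_ (smul_mem _ _ hW.one_mem))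
    exact hW.hadamard_mem (hW.mul_mem hA hA) hW.one_mem
  have e₂ : fromBlocks (0 : Matrix m m ℝ) 0 0 (1 : Matrix n n ℝ) ∈ W := by
    have : fromBlocks (0 : Matrix m m ℝ) 0 0 (1 : Matrix n n ℝ) = 1 - fromBlocks 1 0 0 0 := by
      rw [← fromBlocks_one, sub_eq_add_neg, fromBlocks_neg, fromBlocks_add]; simp
    exact this ▸ sub_mem hW.one_mem e₁
  have sandwich : ∀ {P Q : Matrix (m ⊕ n) (m ⊕ n) ℝ}, P ∈ W → Q ∈ W →
      P * allOnes (m ⊕ n) (m ⊕ n) * Q ∈ W := fun hP hQ =>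
    hW.mul_mem (hW.mul_mem hP hW.allOnes_mem) hQ
  have J₁₁ := sandwich e₁ e₁
  have J₁₂ := sandwich e₁ e₂
  have J₂₁ := sandwich e₂ e₁
  have J₂₂ := sandwich e₂ e₂
  simp only [← fromBlocks_allOnes, fromBlocks_multiply, Matrix.one_mul, Matrix.mul_one,
    Matrix.zero_mul, Matrix.mul_zero, add_zero, zero_add] at J₁₁ J₁₂ J₂₁ J₂₂
  apply designAlgebra_subset_of_generators_mem <;>
    simp only [Set.mem_insert_iff, Set.mem_singleton_iff, forall_eq_or_imp, forall_eq]
  · exact ⟨e₁, J₁₁⟩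
  · refine ⟨?_, J₁₂⟩
    simpa [fromBlocks_hadamard_fromBlocks] using hW.hadamard_mem hA J₁₂
  · refine ⟨?_, J₂₁⟩
    simpa [fromBlocks_hadamard_fromBlocks] using hW.hadamard_mem hA J₂₁
  · refine ⟨e₂, ?_, J₂₂⟩
    simpa [fromBlocks_hadamard_fromBlocks] using hW.hadamard_mem hA J₂₂

lemma IsQuasiSymmetricDesign.hasCoherentRank_nine (h : IsQuasiSymmetricDesign θ₁ θ₂ M X)
    (hθ₂ : θ₂ ≠ 0) (hdeg : θ₁ * (1 - θ₂) + 1 ≠ θ₂ ^ 2 + θ₁ * θ₂ * (θ₂ - 1))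
    (hM01 : ∀ i j, M i j = 0 ∨ M i j = 1) (hX01 : ∀ i j, X i j = 0 ∨ X i j = 1)
    (hXdiag : ∀ i, X i i = 0) (hne : ∀ i, designConfig M X i ≠ 0) {G : SimpleGraph (m ⊕ n)}
    [DecidableRel G.Adj] (hG : G.adjMatrix ℝ = fromBlocks 0 M Mᵀ X) : HasCoherentRank G 9 := by
  have hcc := h.isCoherentConfig_designConfig hθ₂ hM01 hX01 hXdiag
  refine ⟨⟨designConfig M X, hcc, hG ▸ designAlgebra_subset_span_designConfig M X
    (fromBlocks_mem_designAlgebra M X)⟩, ?_⟩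
  rintro r ⟨B, hB, hGB⟩
  exact hcc.le_of_forall_mem_span hne fun i => hB.isCoherentAlgebra_span.designAlgebra_subset h
    hθ₂ hXdiag hdeg (hG ▸ hGB) (designConfig_mem_designAlgebra M X i)

end CoherentClosure

theorem stmt11_general (θ1 θ2 : ℤ) (hθ1 : 1 ≤ θ1) (hθ2 : θ2 ≤ -2)
    (v b : ℕ)
    (hveq : (v : ℝ) = (θ2 : ℝ) * ((θ2 : ℝ) + (θ1 : ℝ) + (θ1 : ℝ) * (θ2 : ℝ)
      - (θ2 : ℝ) ^ 2 * (θ1 : ℝ)) / ((θ1 : ℝ) + 1))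
    (M : Matrix (Fin v) (Fin b) ℝ)
    (hM01 : ∀ i j, M i j = 0 ∨ M i j = 1)
    (hrow : ∀ i, ∑ j, M i j = (θ1 : ℝ) * (1 - (θ2 : ℝ)) + 1)
    (hcol : ∀ j, ∑ i, M i j = (θ2 : ℝ) ^ 2)
    (hMMt : M * Mᵀ = (((θ1 : ℝ) * (1 - (θ2 : ℝ)) + 1) - ((θ1 : ℝ) + 1))
        • (1 : Matrix (Fin v) (Fin v) ℝ)
      + ((θ1 : ℝ) + 1) • Matrix.of (fun _ _ => 1))
    (X : Matrix (Fin b) (Fin b) ℝ)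
    (hXsymm : Xᵀ = X) (hXdiag : ∀ i, X i i = 0) (hX01 : ∀ i j, X i j = 0 ∨ X i j = 1)
    (hXne0 : X ≠ 0)
    (hXneJ : X ≠ Matrix.of (fun _ _ => 1) - (1 : Matrix (Fin b) (Fin b) ℝ))
    (hMtM : Mᵀ * M = (θ2 : ℝ) ^ 2 • (1 : Matrix (Fin b) (Fin b) ℝ) + (-(θ2 : ℝ)) • X
      + (0 : ℝ) • (Matrix.of (fun _ _ => 1) - (1 : Matrix (Fin b) (Fin b) ℝ) - X)) :
    ∀ (G : SimpleGraph (Fin v ⊕ Fin b)) [DecidableRel G.Adj],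
      SimpleGraph.adjMatrix ℝ G = Matrix.fromBlocks 0 M Mᵀ X →
      G.Connected ∧
      {θ : ℝ | adjEig G θ}
        = {(θ2 : ℝ) * ((θ1 : ℝ) * (θ2 : ℝ) - (θ1 : ℝ) - 1), (θ1 : ℝ), (θ2 : ℝ)} ∧
      HasCoherentRank G 9 := by
  intro G _ hG
  have ha : (1 : ℝ) ≤ θ1 := by exact_mod_cast hθ1
  have hc : (θ2 : ℝ) ≤ -2 := by exact_mod_cast hθ2
  have hc0 : (θ2 : ℝ) ≠ 0 := by linarith
  have hc2 : (0 : ℝ) < θ2 ^ 2 - 1 := by nlinarith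
  have h : IsQuasiSymmetricDesign θ1 θ2 M X :=
    ⟨hrow, hcol, by rw [hMMt]; congr 2; ring, by simpa using hMtM, hXsymm⟩
  have hv : (θ2 : ℝ) ^ 2 < v := by
    rw [hveq, lt_div_iff₀ (by linarith)]
    nlinarith [mul_pos (mul_pos (by linarith : (0 : ℝ) < -θ2) (by linarith : (0 : ℝ) < θ1)) hc2]
  have hv1 : 1 < Fintype.card (Fin v) := by
    rw [Fintype.card_fin]; exact_mod_cast (by nlinarith : (1 : ℝ) < v)
  have : Nonempty (Fin v) := Fintype.card_pos_iff.1 (by omega)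
  obtain ⟨p, -⟩ : ∃ p q, X p q ≠ 0 := by by_contra! hX; exact hXne0 (ext hX)
  have : Nonempty (Fin b) := ⟨p⟩
  refine ⟨h.connected (by linarith) (by linarith) hG, h.setOf_adjEig_eq hc0 (by nlinarith) hv1 hG,
    h.hasCoherentRank_nine hc0 (fun hdeg => ?_) hM01 hX01 hXdiag
      (designConfig_ne_zero hv1 (h.ne_zero hc0) (h.ne_allOnes (by simpa using hv.ne)) hXne0
        hXneJ) hG⟩
  nlinarith [mul_pos (by linarith : (0 : ℝ) < θ1 + 1) hc2]

/-- Class 1 converse: for integers `θ1 ≥ 1`, `θ2 ≤ -2`, given a quasi-symmetric design with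
parameters `v = θ2(θ2+θ1+θ1θ2-θ2²θ1)/(θ1+1)`, `k = θ2²`, `λ = θ1+1`,
`b = (1+θ1-θ2θ1)(θ2+θ1+θ1θ2-θ2²θ1)/(θ2(θ1+1))`, `r = θ1(1-θ2)+1`, `x = -θ2`, `y = 0`,
the graph with block adjacency matrix `[[O, M],[Mᵀ, X]]` is connected, has eigenvalue set
exactly `{θ2(θ1θ2-θ1-1), θ1, θ2}`, and has coherent rank `9`. -/
theorem stmt11 (θ1 θ2 : ℤ) (hθ1 : 1 ≤ θ1) (hθ2 : θ2 ≤ -2)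
    (v b : ℕ) (hv : 0 < v) (hb : 0 < b)
    (hveq : (v : ℝ) = (θ2 : ℝ) * ((θ2 : ℝ) + (θ1 : ℝ) + (θ1 : ℝ) * (θ2 : ℝ)
      - (θ2 : ℝ) ^ 2 * (θ1 : ℝ)) / ((θ1 : ℝ) + 1))
    (hbeq : (b : ℝ) = (1 + (θ1 : ℝ) - (θ2 : ℝ) * (θ1 : ℝ))
      * ((θ2 : ℝ) + (θ1 : ℝ) + (θ1 : ℝ) * (θ2 : ℝ) - (θ2 : ℝ) ^ 2 * (θ1 : ℝ))
      / ((θ2 : ℝ) * ((θ1 : ℝ) + 1)))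
    (M : Matrix (Fin v) (Fin b) ℝ)
    (hM01 : ∀ i j, M i j = 0 ∨ M i j = 1)
    (hrow : ∀ i, ∑ j, M i j = (θ1 : ℝ) * (1 - (θ2 : ℝ)) + 1)
    (hcol : ∀ j, ∑ i, M i j = (θ2 : ℝ) ^ 2)
    (hMMt : M * Mᵀ = (((θ1 : ℝ) * (1 - (θ2 : ℝ)) + 1) - ((θ1 : ℝ) + 1))
        • (1 : Matrix (Fin v) (Fin v) ℝ)
      + ((θ1 : ℝ) + 1) • Matrix.of (fun _ _ => 1))
    (X : Matrix (Fin b) (Fin b) ℝ)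
    (hXsymm : Xᵀ = X) (hXdiag : ∀ i, X i i = 0) (hX01 : ∀ i j, X i j = 0 ∨ X i j = 1)
    (hXne0 : X ≠ 0)
    (hXneJ : X ≠ Matrix.of (fun _ _ => 1) - (1 : Matrix (Fin b) (Fin b) ℝ))
    (hMtM : Mᵀ * M = (θ2 : ℝ) ^ 2 • (1 : Matrix (Fin b) (Fin b) ℝ) + (-(θ2 : ℝ)) • X
      + (0 : ℝ) • (Matrix.of (fun _ _ => 1) - (1 : Matrix (Fin b) (Fin b) ℝ) - X)) :
    ∀ (G : SimpleGraph (Fin v ⊕ Fin b)) [DecidableRel G.Adj],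
      SimpleGraph.adjMatrix ℝ G = Matrix.fromBlocks 0 M Mᵀ X →
      G.Connected ∧
      {θ : ℝ | adjEig G θ}
        = {(θ2 : ℝ) * ((θ1 : ℝ) * (θ2 : ℝ) - (θ1 : ℝ) - 1), (θ1 : ℝ), (θ2 : ℝ)} ∧
      HasCoherentRank G 9 :=
  stmt11_general θ1 θ2 hθ1 hθ2 v b hveq M hM01 hrow hcol hMMt X hXsymm hXdiag hX01 hXne0 hXneJ hMtM
end

section
/- There is no graph Γ ∈ 𝒢₃(θ0,θ1,θ2) with exactly three distinct vertex degrees whose vertex set admits a partition into nonempty sets V1, V2, V3 with |V1| ≥ 2 such that: the induced subgraph on V1 is complete or edgeless; either every vertex of V1 is adjacent to every vertex of V2 or no vertex of V1 is adjacent to any vertex of V2; and either every vertex of V1 is adjacent to every vertex of V3 or no vertex of V1 is adjacent to any vertex of V3. -/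
/-!
Two distinct vertices `x, y` of `V1` have the same neighbours outside `{x, y}`, so `e_x - e_y`
is an eigenvector with eigenvalue `0` or `-1`. This eigenvalue is not `θ0` (which is `≥ 1`
because `Γ` has an edge), and it is not `θ2` either: a connected graph with smallest eigenvalue
`≥ -1` is complete, hence regular. So `θ1 ≤ 0`.

Let `g` be the positive Perron eigenvector of `θ0`, which spans its eigenspace. Since
`(A - θ0)(A - θ1)(A - θ2) = 0`, every column of the symmetric matrix `B = (A - θ1)(A - θ2)` lies
in `ℝ g`, so `B = κ g gᵀ`. For `z ⊥ g` this gives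
`0 = zᵀ B z = |A z|² - (θ1 + θ2) zᵀ A z + θ1 θ2 |z|²`, hence `zᵀ A z ≤ 0`; testing this on a
vector supported on an edge and a vertex adjacent to neither of its ends shows that `Γ` is
complete multipartite. There, nonadjacent vertices have equal degrees and adjacent `u, v` have
`deg u + deg v - n` common neighbours, so three vertices of distinct degrees are pairwise
adjacent, and the entries of `B = κ g gᵀ` at them are incompatible.
-/

open Matrix Polynomial

theorem eq_or_eq_or_eq_of_rankOne_relations {κ a b g₁ g₂ g₃ d₁ d₂ d₃ : ℝ} (hg₃ : g₃ ≠ 0)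
    (h₁ : κ * g₁ * g₁ = d₁ + a) (h₂ : κ * g₂ * g₂ = d₂ + a) (h₃ : κ * g₃ * g₃ = d₃ + a)
    (h₁₂ : κ * g₁ * g₂ = d₁ + d₂ - b) (h₁₃ : κ * g₁ * g₃ = d₁ + d₃ - b)
    (h₂₃ : κ * g₂ * g₃ = d₂ + d₃ - b) : d₁ = d₂ ∨ d₁ = d₃ ∨ d₂ = d₃ := by
  by_contra! ⟨hd₁₂, hd₁₃, hd₂₃⟩
  have hκ : κ ≠ 0 := by
    rintro rfl
    exact hd₁₂ (by linarith)
  have hg₂₃ : g₂ - g₃ ≠ 0 := by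
    intro h
    obtain rfl : g₂ = g₃ := by linarith
    exact hd₂₃ (by linarith)
  have hg₁₃ : g₁ - g₃ ≠ 0 := by
    intro h
    obtain rfl : g₁ = g₃ := by linarith
    exact hd₁₃ (by linarith)
  have k₁ : κ * (g₂ - g₃) * (g₁ - g₂ - g₃) = 0 := by linear_combination h₁₂ - h₁₃ - h₂ + h₃
  have k₂ : κ * (g₁ - g₃) * (g₂ - g₁ - g₃) = 0 := by linear_combination h₁₂ - h₂₃ - h₁ + h₃
  have e₁ := (mul_eq_zero.mp k₁).resolve_left (mul_ne_zero hκ hg₂₃)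
  have e₂ := (mul_eq_zero.mp k₂).resolve_left (mul_ne_zero hκ hg₁₃)
  exact hg₃ (by linarith)

namespace Matrix

variable {n : Type*}

theorem mem_spectrum_iff_exists_mulVec_eq_smul_s14 [Fintype n] [DecidableEq n] {K : Type*} [Field K]
    {A : Matrix n n K} {θ : K} : θ ∈ spectrum K A ↔ ∃ f : n → K, f ≠ 0 ∧ A *ᵥ f = θ • f := by
  rw [← spectrum_toLin', ← Module.End.hasEigenvalue_iff_mem_spectrum,
    Module.End.hasEigenvalue_iff]
  simp [Submodule.ne_bot_iff, and_comm]

theorem IsSymm.eq_smul_vecMulVec {K : Type*} [Field K] {B : Matrix n n K} (hB : B.IsSymm)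
    {g : n → K} {v₀ : n} (hg : g v₀ ≠ 0) (hcol : ∀ j, ∃ t : K, B.col j = t • g) :
    ∃ κ : K, B = κ • vecMulVec g g := by
  choose t ht using hcol
  have hB_apply (i j : n) : B i j = t j * g i := by simpa using congrFun (ht j) i
  refine ⟨t v₀ / g v₀, ?_⟩
  ext i j
  have hsymm : t j * g v₀ = t v₀ * g j := by
    rw [← hB_apply, ← hB_apply, hB.apply]
  simp only [hB_apply, smul_apply, vecMulVec_apply, smul_eq_mul]
  field_simp
  linear_combination g i * hsymm

theorem dotProduct_mulVec_le_abs [Fintype n] {A : Matrix n n ℝ}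
    (hA : ∀ i j, 0 ≤ A i j) (x : n → ℝ) : x ⬝ᵥ A *ᵥ x ≤ |x| ⬝ᵥ A *ᵥ |x| := by
  simp only [dotProduct, mulVec, Finset.mul_sum]
  refine Finset.sum_le_sum fun i _ => Finset.sum_le_sum fun j _ => ?_
  calc x i * (A i j * x j) ≤ |x i * (A i j * x j)| := le_abs_self _
    _ = |x| i * (A i j * |x| j) := by simp [abs_mul, abs_of_nonneg (hA i j)]

variable [Fintype n] [DecidableEq n]

theorem IsSymm.sub_smul_one_mul_sub_smul_one {A : Matrix n n ℝ} (hA : A.IsSymm) (a b : ℝ) :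
    ((A - a • 1) * (A - b • 1)).IsSymm := by
  simp only [IsSymm, transpose_mul, transpose_sub, transpose_smul, transpose_one, hA.eq, sub_mul,
    mul_sub, Matrix.smul_mul, Matrix.mul_smul, one_mul, mul_one, smul_smul]

theorem IsSymm.dotProduct_mulVec_nonpos {A : Matrix n n ℝ} (hA : A.IsSymm) {a b : ℝ}
    (hab : a + b < 0) (hab' : 0 ≤ a * b) {z : n → ℝ}
    (hz : z ⬝ᵥ ((A - a • 1) * (A - b • 1)) *ᵥ z = 0) : z ⬝ᵥ A *ᵥ z ≤ 0 := by
  have hsq : z ⬝ᵥ (A * A) *ᵥ z = (A *ᵥ z) ⬝ᵥ (A *ᵥ z) := by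
    rw [← mulVec_mulVec, dotProduct_mulVec, ← mulVec_transpose, hA.eq]
  have hexp : z ⬝ᵥ ((A - a • 1) * (A - b • 1)) *ᵥ z
      = z ⬝ᵥ (A * A) *ᵥ z - (a + b) * (z ⬝ᵥ A *ᵥ z) + a * b * (z ⬝ᵥ z) := by
    simp only [sub_mul, mul_sub, Matrix.smul_mul, Matrix.mul_smul, one_mul, mul_one, smul_smul,
      sub_mulVec, smul_mulVec, one_mulVec, dotProduct_sub, dotProduct_smul, smul_eq_mul]
    ring
  have h1 : 0 ≤ (A *ᵥ z) ⬝ᵥ (A *ᵥ z) := dotProduct_self_star_nonneg _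
  have h2 : 0 ≤ z ⬝ᵥ z := dotProduct_self_star_nonneg _
  nlinarith [mul_nonneg hab' h2]

namespace IsHermitian

variable {A : Matrix n n ℝ} {μ : ℝ}

theorem posSemidef_smul_one_sub (hA : A.IsHermitian) (h : ∀ θ ∈ spectrum ℝ A, θ ≤ μ) :
    (μ • 1 - A).PosSemidef := by
  refine posSemidef_iff_isHermitian_and_spectrum_nonneg.mpr ⟨?_, ?_⟩
  · exact (isHermitian_one.smul (IsSelfAdjoint.all μ)).sub hA
  · rw [← Algebra.algebraMap_eq_smul_one, ← spectrum.singleton_sub_eq]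
    rintro _ ⟨_, rfl, θ, hθ, rfl⟩
    simpa using h θ hθ

theorem posSemidef_sub_smul_one (hA : A.IsHermitian) (h : ∀ θ ∈ spectrum ℝ A, μ ≤ θ) :
    (A - μ • 1).PosSemidef := by
  refine posSemidef_iff_isHermitian_and_spectrum_nonneg.mpr ⟨?_, ?_⟩
  · exact hA.sub (isHermitian_one.smul (IsSelfAdjoint.all μ))
  · rw [← Algebra.algebraMap_eq_smul_one, ← spectrum.sub_singleton_eq]
    rintro _ ⟨θ, hθ, _, rfl, rfl⟩
    simpa using h θ hθ

theorem dotProduct_mulVec_le (hA : A.IsHermitian) (h : ∀ θ ∈ spectrum ℝ A, θ ≤ μ) (x : n → ℝ) :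
    x ⬝ᵥ A *ᵥ x ≤ μ * (x ⬝ᵥ x) := by
  have := (hA.posSemidef_smul_one_sub h).dotProduct_mulVec_nonneg x
  simp only [star_trivial, sub_mulVec, smul_mulVec, one_mulVec, dotProduct_sub,
    dotProduct_smul, smul_eq_mul] at this
  linarith

theorem le_dotProduct_mulVec (hA : A.IsHermitian) (h : ∀ θ ∈ spectrum ℝ A, μ ≤ θ) (x : n → ℝ) :
    μ * (x ⬝ᵥ x) ≤ x ⬝ᵥ A *ᵥ x := by
  have := (hA.posSemidef_sub_smul_one h).dotProduct_mulVec_nonneg x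
  simp only [star_trivial, sub_mulVec, smul_mulVec, one_mulVec, dotProduct_sub,
    dotProduct_smul, smul_eq_mul] at this
  linarith

theorem mulVec_eq_smul_of_le_dotProduct_mulVec (hA : A.IsHermitian)
    (h : ∀ θ ∈ spectrum ℝ A, θ ≤ μ) {x : n → ℝ} (hx : μ * (x ⬝ᵥ x) ≤ x ⬝ᵥ A *ᵥ x) :
    A *ᵥ x = μ • x := by
  have hM := hA.posSemidef_smul_one_sub h
  have hzero : star x ⬝ᵥ (μ • 1 - A) *ᵥ x = 0 := by
    have := hA.dotProduct_mulVec_le h x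
    simp only [star_trivial, sub_mulVec, smul_mulVec, one_mulVec, dotProduct_sub,
      dotProduct_smul, smul_eq_mul]
    linarith
  have := (hM.dotProduct_mulVec_zero_iff x).mp hzero
  rw [sub_mulVec, smul_mulVec, one_mulVec, sub_eq_zero] at this
  exact this.symm

theorem aeval_eq_zero_of_isRoot (hA : A.IsHermitian) (p : ℝ[X])
    (hp : ∀ θ ∈ spectrum ℝ A, p.IsRoot θ) : aeval A p = 0 := by
  rw [← cfc_polynomial p A hA.isSelfAdjoint, cfc_congr (g := 0) hp, cfc_zero]

theorem sub_smul_one_mul_sub_smul_one_mul_sub_smul_one_eq_zero (hA : A.IsHermitian)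
    {a b c : ℝ} (hspec : spectrum ℝ A ⊆ {a, b, c}) :
    (A - a • 1) * (A - b • 1) * (A - c • 1) = 0 := by
  have := hA.aeval_eq_zero_of_isRoot ((X - C a) * (X - C b) * (X - C c)) fun θ hθ => by
    rcases hspec hθ with rfl | rfl | rfl <;> simp
  simpa [Algebra.algebraMap_eq_smul_one] using this

end IsHermitian

end Matrix

namespace SimpleGraph

variable {V : Type*} {G : SimpleGraph V}

theorem Preconnected.forall_of_adj_imp (hG : G.Preconnected) {P : V → Prop}
    (hP : ∀ ⦃u w⦄, G.Adj u w → P u → P w) {v : V} (hv : P v) (w : V) : P w := by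
  obtain ⟨p⟩ := hG v w
  induction p with
  | nil => exact hv
  | cons h _ ih => exact ih (hP h hv)

variable [Fintype V] [DecidableRel G.Adj]

theorem Connected.pos_of_mulVec_eq_smul (hG : G.Connected) {f : V → ℝ} {θ : ℝ} (hf0 : 0 ≤ f)
    (hf : f ≠ 0) (heig : G.adjMatrix ℝ *ᵥ f = θ • f) (v : V) : 0 < f v := by
  refine (hf0 v).lt_of_ne' fun hv => hf (funext ?_)
  refine hG.preconnected.forall_of_adj_imp (P := fun u => f u = 0) (fun u w huw hu => ?_) hv
  have hsum : ∑ x ∈ G.neighborFinset u, f x = 0 := by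
    rw [← adjMatrix_mulVec_apply, heig, Pi.smul_apply, hu, smul_zero]
  exact (Finset.sum_eq_zero_iff_of_nonneg fun x _ => hf0 x).mp hsum w (by simpa using huw)

theorem IsCompleteMultipartite.neighborFinset_eq_of_not_adj (hG : G.IsCompleteMultipartite)
    {u v : V} (huv : ¬G.Adj u v) : G.neighborFinset u = G.neighborFinset v := by
  have hvu : ¬G.Adj v u := fun h => huv h.symm
  ext k
  simp only [mem_neighborFinset]
  exact ⟨fun h => not_not.mp fun hvk => hG.trans u v k huv hvk h,
    fun h => not_not.mp fun huk => hG.trans v u k hvu huk h⟩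

theorem IsCompleteMultipartite.degree_eq_of_not_adj (hG : G.IsCompleteMultipartite) {u v : V}
    (huv : ¬G.Adj u v) : G.degree u = G.degree v := by
  rw [← card_neighborFinset_eq_degree, ← card_neighborFinset_eq_degree,
    hG.neighborFinset_eq_of_not_adj huv]

variable [DecidableEq V]

theorem IsCompleteMultipartite.adjMatrix_mul_self_apply_of_adj (hG : G.IsCompleteMultipartite)
    {u v : V} (huv : G.Adj u v) :
    (G.adjMatrix ℝ * G.adjMatrix ℝ) u v = G.degree u + G.degree v - Fintype.card V := by
  have hunion : G.neighborFinset u ∪ G.neighborFinset v = Finset.univ := by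
    refine Finset.eq_univ_of_forall fun k => ?_
    simp only [Finset.mem_union, mem_neighborFinset]
    by_contra! hk
    exact hG.trans u k v hk.1 (fun h => hk.2 h.symm) huv
  have hcard := Finset.card_union_add_card_inter (G.neighborFinset u) (G.neighborFinset v)
  rw [hunion, Finset.card_univ, card_neighborFinset_eq_degree,
    card_neighborFinset_eq_degree] at hcard
  have hinter : (G.adjMatrix ℝ * G.adjMatrix ℝ) u v
      = (G.neighborFinset u ∩ G.neighborFinset v).card := by
    rw [adjMatrix_mul_apply, ← Finset.filter_mem_eq_inter]
    simp [adjMatrix_apply, Finset.sum_boole, adj_comm]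
  rw [hinter, eq_sub_iff_add_eq, add_comm]
  exact_mod_cast hcard

theorem adjMatrix_mulVec_single_sub_single {x y : V} (hxy : x ≠ y)
    (htwin : ∀ v, v ≠ x → v ≠ y → (G.Adj v x ↔ G.Adj v y)) :
    G.adjMatrix ℝ *ᵥ (Pi.single x 1 - Pi.single y 1) =
      (if G.Adj x y then -1 else 0 : ℝ) • (Pi.single x 1 - Pi.single y 1) := by
  ext v
  simp only [mulVec_sub, mulVec_single_one, Pi.sub_apply, Pi.smul_apply, col_apply,
    adjMatrix_apply]
  by_cases hvx : v = x
  · subst hvx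
    split_ifs <;> simp_all
  by_cases hvy : v = y
  · subst hvy
    split_ifs <;> simp_all [adj_comm]
  simp [hvx, hvy, htwin v hvx hvy]

variable {μ θ₀ θ₁ θ₂ : ℝ}

theorem one_le_of_spectrum_le (h : ∀ θ ∈ spectrum ℝ (G.adjMatrix ℝ), θ ≤ μ) {a b : V}
    (hab : G.Adj a b) : 1 ≤ μ := by
  set x : V → ℝ := Pi.single a 1 + Pi.single b 1
  have hquad : x ⬝ᵥ G.adjMatrix ℝ *ᵥ x = 2 := by
    simp only [x, mulVec_add, mulVec_single, dotProduct_add, add_dotProduct, single_dotProduct]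
    simp [adjMatrix_apply, hab, hab.symm]
    norm_num
  have hnorm : x ⬝ᵥ x = 2 := by
    simp only [x, dotProduct_add, add_dotProduct, single_dotProduct]
    simp [hab.ne, hab.ne.symm]
    norm_num
  have := (G.isHermitian_adjMatrix ℝ).dotProduct_mulVec_le h x
  rw [hquad, hnorm] at this
  linarith

theorem adj_of_neg_one_le_spectrum (h : ∀ θ ∈ spectrum ℝ (G.adjMatrix ℝ), -1 ≤ θ) {u v w : V}
    (huv : G.Adj u v) (hvw : G.Adj v w) (huw : u ≠ w) : G.Adj u w := by
  by_contra hn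
  have hn' : ¬G.Adj w u := fun h => hn h.symm
  set x : V → ℝ := Pi.single u 1 - Pi.single v 1 + Pi.single w 1
  have hquad : x ⬝ᵥ G.adjMatrix ℝ *ᵥ x = -4 := by
    simp only [x, mulVec_add, mulVec_sub, mulVec_single, dotProduct_add, add_dotProduct,
      dotProduct_sub, sub_dotProduct, single_dotProduct]
    simp [adjMatrix_apply, huv, hvw, huv.symm, hvw.symm, hn, hn']
    norm_num
  have hnorm : x ⬝ᵥ x = 3 := by
    simp only [x, dotProduct_add, add_dotProduct, dotProduct_sub, sub_dotProduct,
      single_dotProduct]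
    simp [huv.ne, hvw.ne, huw, huv.ne.symm, hvw.ne.symm, huw.symm]
    norm_num
  have := (G.isHermitian_adjMatrix ℝ).le_dotProduct_mulVec h x
  linarith

theorem Connected.degree_eq_of_neg_one_le_spectrum (hG : G.Connected)
    (h : ∀ θ ∈ spectrum ℝ (G.adjMatrix ℝ), -1 ≤ θ) (u v : V) : G.degree u = G.degree v := by
  have hadj (u w : V) (huw : u ≠ w) : G.Adj u w := by
    refine (hG.preconnected.forall_of_adj_imp (P := fun w => w = u ∨ G.Adj u w)
      (fun a b hab ha => ?_) (Or.inl rfl) w).resolve_left huw.symm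
    by_cases hbu : b = u
    · exact Or.inl hbu
    rcases ha with rfl | hua
    · exact Or.inr hab
    · exact Or.inr (adj_of_neg_one_le_spectrum h hua hab (Ne.symm hbu))
  have hN (u : V) : G.neighborFinset u = Finset.univ.erase u := by
    ext w
    simpa [eq_comm] using ⟨fun huw => huw.ne, hadj u w⟩
  rw [← card_neighborFinset_eq_degree, ← card_neighborFinset_eq_degree, hN, hN,
    Finset.card_erase_of_mem (Finset.mem_univ _), Finset.card_erase_of_mem (Finset.mem_univ _)]

theorem adjMatrix_mulVec_abs_eq_smul (h : ∀ θ ∈ spectrum ℝ (G.adjMatrix ℝ), θ ≤ μ)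
    {f : V → ℝ} (hf : G.adjMatrix ℝ *ᵥ f = μ • f) : G.adjMatrix ℝ *ᵥ |f| = μ • |f| := by
  refine (G.isHermitian_adjMatrix ℝ).mulVec_eq_smul_of_le_dotProduct_mulVec h ?_
  have habs : |f| ⬝ᵥ |f| = f ⬝ᵥ f := by simp [dotProduct, abs_mul_abs_self]
  have hle := dotProduct_mulVec_le_abs (A := G.adjMatrix ℝ)
    (fun i j => by rw [adjMatrix_apply]; split_ifs <;> norm_num) f
  rw [hf, dotProduct_smul, smul_eq_mul] at hle
  rwa [habs]

theorem Connected.exists_pos_mulVec_eq_smul (hG : G.Connected)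
    (h : ∀ θ ∈ spectrum ℝ (G.adjMatrix ℝ), θ ≤ μ) (hμ : μ ∈ spectrum ℝ (G.adjMatrix ℝ)) :
    ∃ g : V → ℝ, (∀ v, 0 < g v) ∧ G.adjMatrix ℝ *ᵥ g = μ • g := by
  obtain ⟨f, hf, hfeig⟩ := mem_spectrum_iff_exists_mulVec_eq_smul_s14.mp hμ
  have habs := adjMatrix_mulVec_abs_eq_smul h hfeig
  exact ⟨|f|, hG.pos_of_mulVec_eq_smul (abs_nonneg f) (by simpa using hf) habs, habs⟩

theorem Connected.exists_eq_smul_of_mulVec_eq_smul (hG : G.Connected)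
    (h : ∀ θ ∈ spectrum ℝ (G.adjMatrix ℝ), θ ≤ μ) {g : V → ℝ} (hg : ∀ v, 0 < g v)
    (hgeig : G.adjMatrix ℝ *ᵥ g = μ • g) {f : V → ℝ} (hf : G.adjMatrix ℝ *ᵥ f = μ • f) :
    ∃ t : ℝ, f = t • g := by
  obtain ⟨v₀⟩ := hG.nonempty
  refine ⟨f v₀ / g v₀, ?_⟩
  set r := f - (f v₀ / g v₀) • g
  have hr : G.adjMatrix ℝ *ᵥ r = μ • r := by
    simp only [r, mulVec_sub, mulVec_smul, hf, hgeig, smul_sub, smul_comm μ]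
  have hr₀ : r v₀ = 0 := by
    simp [r, div_mul_cancel₀ _ (hg v₀).ne']
  -- `r` vanishes at `v₀`, while a nonzero top eigenvector has no zero coordinate.
  by_contra hne
  have hr_ne : r ≠ 0 := sub_ne_zero.mpr hne
  have := hG.pos_of_mulVec_eq_smul (abs_nonneg r) (by simpa using hr_ne)
    (adjMatrix_mulVec_abs_eq_smul h hr) v₀
  simp [hr₀] at this

theorem isCompleteMultipartite_of_dotProduct_mulVec_nonpos {g : V → ℝ} (hg : ∀ v, 0 < g v)
    (hneg : ∀ z, g ⬝ᵥ z = 0 → z ⬝ᵥ G.adjMatrix ℝ *ᵥ z ≤ 0) : G.IsCompleteMultipartite := by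
  by_contra hG
  obtain ⟨v, w₁, w₂, h12, hv1, hv2⟩ := exists_isPathGraph3Compl_of_not_isCompleteMultipartite hG
  have h1v : ¬G.Adj w₁ v := fun h => hv1 h.symm
  have h2v : ¬G.Adj w₂ v := fun h => hv2 h.symm
  set z : V → ℝ := Pi.single v (-(g w₁ + g w₂)) + Pi.single w₁ (g v) + Pi.single w₂ (g v)
  have horth : g ⬝ᵥ z = 0 := by
    simp only [z, dotProduct_add, dotProduct_single]
    ring
  have hquad : z ⬝ᵥ G.adjMatrix ℝ *ᵥ z = 2 * g v ^ 2 := by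
    simp only [z, mulVec_add, mulVec_single, dotProduct_add, add_dotProduct, single_dotProduct]
    simp [adjMatrix_apply, h12, h12.symm, hv1, hv2, h1v, h2v]
    ring
  have := hneg z horth
  nlinarith [hg v]

theorem Connected.exists_sub_smul_one_mul_sub_smul_one_eq_smul_vecMulVec (hG : G.Connected)
    (hspec : spectrum ℝ (G.adjMatrix ℝ) = {θ₀, θ₁, θ₂}) (h₀₁ : θ₁ < θ₀) (h₁₂ : θ₂ < θ₁) :
    ∃ g : V → ℝ, (∀ v, 0 < g v) ∧
      ∃ κ : ℝ, (G.adjMatrix ℝ - θ₁ • 1) * (G.adjMatrix ℝ - θ₂ • 1) = κ • vecMulVec g g := by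
  have htop : ∀ θ ∈ spectrum ℝ (G.adjMatrix ℝ), θ ≤ θ₀ := by
    rw [hspec]
    rintro θ (rfl | rfl | rfl) <;> linarith
  obtain ⟨g, hg, hgeig⟩ := hG.exists_pos_mulVec_eq_smul htop (by simp [hspec])
  refine ⟨g, hg, ?_⟩
  set B := (G.adjMatrix ℝ - θ₁ • 1) * (G.adjMatrix ℝ - θ₂ • 1)
  have hAB : G.adjMatrix ℝ * B = θ₀ • B := by
    have := (G.isHermitian_adjMatrix ℝ).sub_smul_one_mul_sub_smul_one_mul_sub_smul_one_eq_zero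
      hspec.subset
    rw [mul_assoc, sub_mul, sub_eq_zero, Matrix.smul_mul, one_mul] at this
    exact this
  have hcol (j : V) : ∃ t : ℝ, B.col j = t • g := by
    refine hG.exists_eq_smul_of_mulVec_eq_smul htop hg hgeig ?_
    rw [← mulVec_single_one, mulVec_mulVec, hAB, smul_mulVec]
  obtain ⟨v₀⟩ := hG.nonempty
  exact ((isSymm_adjMatrix G).sub_smul_one_mul_sub_smul_one θ₁ θ₂).eq_smul_vecMulVec (hg v₀).ne'
    hcol

theorem isCompleteMultipartite_of_sub_smul_one_mul_sub_smul_one_eq {κ : ℝ} (h₁₂ : θ₂ < θ₁)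
    (hθ₁ : θ₁ ≤ 0) {g : V → ℝ} (hg : ∀ v, 0 < g v)
    (hB : (G.adjMatrix ℝ - θ₁ • 1) * (G.adjMatrix ℝ - θ₂ • 1) = κ • vecMulVec g g) :
    G.IsCompleteMultipartite := by
  refine isCompleteMultipartite_of_dotProduct_mulVec_nonpos hg fun z hz => ?_
  refine (isSymm_adjMatrix G).dotProduct_mulVec_nonpos (a := θ₁) (b := θ₂) (by linarith)
    (by nlinarith) ?_
  rw [hB, smul_mulVec, vecMulVec_mulVec, hz]
  simp

theorem Connected.le_zero_of_spectrum_eq (hG : G.Connected)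
    (hspec : spectrum ℝ (G.adjMatrix ℝ) = {θ₀, θ₁, θ₂}) (h₀₁ : θ₁ < θ₀) (h₁₂ : θ₂ < θ₁) {c : ℝ}
    (hc : c ∈ spectrum ℝ (G.adjMatrix ℝ)) (hc₁ : -1 ≤ c) (hc₀ : c ≤ 0) {u v : V}
    (huv : G.degree u ≠ G.degree v) : θ₁ ≤ 0 := by
  have : Nontrivial V := ⟨u, v, fun h => huv (h ▸ rfl)⟩
  obtain ⟨w, huw⟩ := hG.preconnected.exists_adj_of_nontrivial u
  have hθ₀ : 1 ≤ θ₀ :=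
    one_le_of_spectrum_le (by rw [hspec]; rintro θ (rfl | rfl | rfl) <;> linarith) huw
  rw [hspec] at hc
  rcases hc with rfl | rfl | rfl
  · linarith
  · exact hc₀
  · refine absurd (hG.degree_eq_of_neg_one_le_spectrum ?_ u v) huv
    rw [hspec]
    rintro θ (rfl | rfl | rfl) <;> linarith

theorem Connected.degree_eq_or_of_spectrum_eq (hG : G.Connected)
    (hspec : spectrum ℝ (G.adjMatrix ℝ) = {θ₀, θ₁, θ₂}) (h₀₁ : θ₁ < θ₀) (h₁₂ : θ₂ < θ₁)
    (hθ₁ : θ₁ ≤ 0) (x₁ x₂ x₃ : V) :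
    G.degree x₁ = G.degree x₂ ∨ G.degree x₁ = G.degree x₃ ∨ G.degree x₂ = G.degree x₃ := by
  obtain ⟨g, hg, κ, hB⟩ :=
    hG.exists_sub_smul_one_mul_sub_smul_one_eq_smul_vecMulVec hspec h₀₁ h₁₂
  have hcm := isCompleteMultipartite_of_sub_smul_one_mul_sub_smul_one_eq h₁₂ hθ₁ hg hB
  have hentry (u v : V) : κ * g u * g v = (G.adjMatrix ℝ * G.adjMatrix ℝ) u v
      - (θ₁ + θ₂) * G.adjMatrix ℝ u v + θ₁ * θ₂ * (1 : Matrix V V ℝ) u v := by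
    have := congrFun (congrFun hB u) v
    simp only [sub_mul, mul_sub, Matrix.smul_mul, Matrix.mul_smul, one_mul, mul_one, smul_smul,
      Matrix.sub_apply, Matrix.smul_apply, vecMulVec_apply, smul_eq_mul] at this
    linarith
  have hdiag (v : V) : κ * g v * g v = G.degree v + θ₁ * θ₂ := by
    rw [hentry, adjMatrix_mul_self_apply_self]
    simp
  have hoff {u v : V} (huv : G.Adj u v) :
      κ * g u * g v = G.degree u + G.degree v - (Fintype.card V + (θ₁ + θ₂)) := by
    rw [hentry, hcm.adjMatrix_mul_self_apply_of_adj huv]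
    simp [huv, huv.ne]
    ring
  by_cases hadj₁₂ : G.Adj x₁ x₂
  · by_cases hadj₁₃ : G.Adj x₁ x₃
    · by_cases hadj₂₃ : G.Adj x₂ x₃
      · simpa only [Nat.cast_inj] using eq_or_eq_or_eq_of_rankOne_relations (hg x₃).ne'
          (hdiag x₁) (hdiag x₂) (hdiag x₃) (hoff hadj₁₂) (hoff hadj₁₃) (hoff hadj₂₃)
      · exact .inr (.inr (hcm.degree_eq_of_not_adj hadj₂₃))
    · exact .inr (.inl (hcm.degree_eq_of_not_adj hadj₁₃))
  · exact .inl (hcm.degree_eq_of_not_adj hadj₁₂)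

end SimpleGraph

theorem SimpleGraph.adj_iff_adj_of_mem {V : Type*} [Fintype V] [DecidableEq V] {G : SimpleGraph V}
    {V1 V2 V3 : Finset V} (hcover : V1 ∪ V2 ∪ V3 = Finset.univ)
    (hV1ind : (∀ x ∈ V1, ∀ y ∈ V1, x ≠ y → G.Adj x y) ∨ (∀ x ∈ V1, ∀ y ∈ V1, ¬ G.Adj x y))
    (hV12 : (∀ x ∈ V1, ∀ y ∈ V2, G.Adj x y) ∨ (∀ x ∈ V1, ∀ y ∈ V2, ¬ G.Adj x y))
    (hV13 : (∀ x ∈ V1, ∀ y ∈ V3, G.Adj x y) ∨ (∀ x ∈ V1, ∀ y ∈ V3, ¬ G.Adj x y))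
    {x y v : V} (hx : x ∈ V1) (hy : y ∈ V1) (hvx : v ≠ x) (hvy : v ≠ y) :
    G.Adj v x ↔ G.Adj v y := by
  have hout {W : Finset V}
      (hW : (∀ x ∈ V1, ∀ y ∈ W, G.Adj x y) ∨ (∀ x ∈ V1, ∀ y ∈ W, ¬ G.Adj x y)) (hv : v ∈ W) :
      G.Adj v x ↔ G.Adj v y := by
    rw [G.adj_comm v x, G.adj_comm v y]
    rcases hW with h | h
    · exact iff_of_true (h x hx v hv) (h y hy v hv)
    · exact iff_of_false (h x hx v hv) (h y hy v hv)
  have hv : v ∈ V1 ∪ V2 ∪ V3 := hcover ▸ Finset.mem_univ v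
  rcases Finset.mem_union.mp hv with hv | hv
  · rcases Finset.mem_union.mp hv with hv | hv
    · rcases hV1ind with h | h
      · exact iff_of_true (h v hv x hx hvx) (h v hv y hy hvy)
      · exact iff_of_false (h v hv x hx) (h v hv y hy)
    · exact hout hV12 hv
  · exact hout hV13 hv

theorem stmt14_general {V : Type} [Fintype V] [DecidableEq V] (G : SimpleGraph V) [DecidableRel G.Adj]
    (θ0 θ1 θ2 : ℝ) (h : InG3 G θ0 θ1 θ2)
    (d1 d2 d3 : ℕ) (hd12 : d1 ≠ d2) (hd13 : d1 ≠ d3) (hd23 : d2 ≠ d3)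
    (he1 : ∃ x : V, G.degree x = d1) (he2 : ∃ x : V, G.degree x = d2)
    (he3 : ∃ x : V, G.degree x = d3)
    (V1 V2 V3 : Finset V)
    (hcover : V1 ∪ V2 ∪ V3 = Finset.univ)
    (hV1card : 2 ≤ V1.card)
    (hV1ind : (∀ x ∈ V1, ∀ y ∈ V1, x ≠ y → G.Adj x y) ∨ (∀ x ∈ V1, ∀ y ∈ V1, ¬ G.Adj x y))
    (hV12 : (∀ x ∈ V1, ∀ y ∈ V2, G.Adj x y) ∨ (∀ x ∈ V1, ∀ y ∈ V2, ¬ G.Adj x y))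
    (hV13 : (∀ x ∈ V1, ∀ y ∈ V3, G.Adj x y) ∨ (∀ x ∈ V1, ∀ y ∈ V3, ¬ G.Adj x y)) :
    False := by
  obtain ⟨hconn, hθ01, hθ12, hset⟩ := h
  have hspec : spectrum ℝ (G.adjMatrix ℝ) = {θ0, θ1, θ2} := by
    rw [← hset]
    ext θ
    exact mem_spectrum_iff_exists_mulVec_eq_smul_s14
  obtain ⟨x1, rfl⟩ := he1
  obtain ⟨x2, rfl⟩ := he2
  obtain ⟨x3, rfl⟩ := he3
  obtain ⟨x, hx, y, hy, hxy⟩ := Finset.one_lt_card.mp hV1card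
  have htwin := G.adjMatrix_mulVec_single_sub_single hxy fun v hvx hvy =>
    SimpleGraph.adj_iff_adj_of_mem hcover hV1ind hV12 hV13 hx hy hvx hvy
  have hθ1 : θ1 ≤ 0 := by
    refine hconn.le_zero_of_spectrum_eq hspec hθ01 hθ12
      (mem_spectrum_iff_exists_mulVec_eq_smul_s14.mpr ⟨_, ?_, htwin⟩) ?_ ?_ hd12
    · exact sub_ne_zero.mpr fun h => by simpa [hxy] using congrFun h x
    all_goals split_ifs <;> norm_num
  rcases hconn.degree_eq_or_of_spectrum_eq hspec hθ01 hθ12 hθ1 x1 x2 x3 with hdeg | hdeg | hdeg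
  exacts [hd12 hdeg, hd13 hdeg, hd23 hdeg]

/-- No triregular graph in `𝒢₃` admits a partition `V1, V2, V3` into nonempty parts with
`|V1| ≥ 2` such that `Γ[V1]` is complete or edgeless and the bipartite graphs between `V1`
and `V2`, and between `V1` and `V3`, are each complete or empty. -/
theorem stmt14 {V : Type} [Fintype V] [DecidableEq V] (G : SimpleGraph V) [DecidableRel G.Adj]
    (θ0 θ1 θ2 : ℝ) (h : InG3 G θ0 θ1 θ2)
    (d1 d2 d3 : ℕ) (hd12 : d1 ≠ d2) (hd13 : d1 ≠ d3) (hd23 : d2 ≠ d3)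
    (hdeg : ∀ x : V, G.degree x = d1 ∨ G.degree x = d2 ∨ G.degree x = d3)
    (he1 : ∃ x : V, G.degree x = d1) (he2 : ∃ x : V, G.degree x = d2)
    (he3 : ∃ x : V, G.degree x = d3)
    (V1 V2 V3 : Finset V) (hV1 : V1.Nonempty) (hV2 : V2.Nonempty) (hV3 : V3.Nonempty)
    (h12 : Disjoint V1 V2) (h13 : Disjoint V1 V3) (h23 : Disjoint V2 V3)
    (hcover : V1 ∪ V2 ∪ V3 = Finset.univ)
    (hV1card : 2 ≤ V1.card)
    (hV1ind : (∀ x ∈ V1, ∀ y ∈ V1, x ≠ y → G.Adj x y) ∨ (∀ x ∈ V1, ∀ y ∈ V1, ¬ G.Adj x y))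
    (hV12 : (∀ x ∈ V1, ∀ y ∈ V2, G.Adj x y) ∨ (∀ x ∈ V1, ∀ y ∈ V2, ¬ G.Adj x y))
    (hV13 : (∀ x ∈ V1, ∀ y ∈ V3, G.Adj x y) ∨ (∀ x ∈ V1, ∀ y ∈ V3, ¬ G.Adj x y)) :
    False :=
  stmt14_general G θ0 θ1 θ2 h d1 d2 d3 hd12 hd13 hd23 he1 he2 he3 V1 V2 V3 hcover hV1card hV1ind
    hV12 hV13
end

section
/- Define the sequence a : ℕ → ℤ by a(0) = 1, a(1) = 5, and a(k+2) = 4·a(k+1) − a(k) for all k. Then for every natural number k, 3·(a(k)² + 2) = (a(k+1) − 2·a(k))², and the integer a(k+1) − 2·a(k) is odd. -/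
/-- For the recurrence `a 0 = 1`, `a 1 = 5`, `a (k+2) = 4 a (k+1) - a k`, we have
`3 (a k ^ 2 + 2) = (a (k+1) - 2 a k)^2`, and `a (k+1) - 2 a k` is odd. -/
theorem stmt17 (a : ℕ → ℤ) (h0 : a 0 = 1) (h1 : a 1 = 5)
    (hrec : ∀ k : ℕ, a (k + 2) = 4 * a (k + 1) - a k) (k : ℕ) :
    3 * ((a k) ^ 2 + 2) = (a (k + 1) - 2 * a k) ^ 2 ∧ Odd (a (k + 1) - 2 * a k) := by
  have key : ∀ k : ℕ, (a (k+1))^2 - 4 * a (k+1) * a k + (a k)^2 = 6 ∧ Odd (a k) ∧ Odd (a (k+1)) := by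
    intro k
    induction k with
    | zero => refine ⟨by rw [h0, h1]; ring, by rw [h0]; decide, by rw [h1]; decide⟩
    | succ n ih =>
      obtain ⟨hinv, ho1, ho2⟩ := ih
      refine ⟨?_, ho2, ?_⟩
      · rw [hrec]; nlinarith [hinv]
      · rw [hrec]; obtain ⟨m, hm⟩ := ho1; exact ⟨2 * a (n+1) - m - 1, by omega⟩
  obtain ⟨hinv, ho1, ho2⟩ := key k
  refine ⟨by nlinarith [hinv], ?_⟩
  obtain ⟨m, hm⟩ := ho2
  exact ⟨m - a k, by omega⟩
end

section
/- Let m, n, N be positive integers with n ≥ 2, m ≥ 2, N ≤ n−1, and n ≠ 2m−2. Suppose that, as real numbers, N = n/2 − √((n − 2m)·(n − 2m + 2)·(n + 2)·n) / (2·(n − 2m + 2)) (where √ denotes the real square root). Then n < 3m and 2m ≤ n. -/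
set_option maxHeartbeats 1000000 in
/-- If `N = n/2 - √((n-2m)(n-2m+2)(n+2)n) / (2(n-2m+2))` for positive integers `m, n, N`
with `n ≥ 2`, `m ≥ 2`, `1 ≤ N ≤ n-1` and `n ≠ 2m-2`, then `n/3 < m ≤ n/2`. -/
theorem stmt18 (m n N : ℕ) (hn : 2 ≤ n) (hm : 2 ≤ m) (hN1 : 1 ≤ N) (hNn : N ≤ n - 1)
    (hne : n ≠ 2 * m - 2)
    (hval : (N : ℝ) = (n : ℝ) / 2
      - Real.sqrt (((n : ℝ) - 2 * m) * ((n : ℝ) - 2 * m + 2) * ((n : ℝ) + 2) * n)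
        / (2 * ((n : ℝ) - 2 * m + 2))) :
    n < 3 * m ∧ 2 * m ≤ n := by
  have hN' : (N : ℝ) ≤ (n : ℝ) - 1 := by
    have h : N + 1 ≤ n := by omega
    have h' : ((N : ℝ) + 1) ≤ n := by exact_mod_cast h
    linarith
  have hN1' : (1 : ℝ) ≤ N := by exact_mod_cast hN1
  have hn' : (2 : ℝ) ≤ n := by exact_mod_cast hn
  have hm' : (2 : ℝ) ≤ m := by exact_mod_cast hm
  set D := Real.sqrt (((n : ℝ) - 2 * m) * ((n : ℝ) - 2 * m + 2) * ((n : ℝ) + 2) * n) with hD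
  have hDnn : 0 ≤ D := Real.sqrt_nonneg _
  have h2m : 2 * m ≤ n := by
    by_contra h
    push_neg at h
    rcases eq_or_ne n (2 * m - 1) with h1 | h1
    · -- n = 2m - 1
      have hnr : (n : ℝ) = 2 * m - 1 := by
        have h2 : n + 1 = 2 * m := by omega
        have : ((n : ℝ) + 1) = 2 * m := by exact_mod_cast h2
        linarith
      have e1 : (n : ℝ) - 2 * m = -1 := by linarith
      have hD0 : D = 0 := by
        rw [hD, e1]
        apply Real.sqrt_eq_zero_of_nonpos
        nlinarith
      rw [hD0] at hval
      have h2N : 2 * N = n := by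
        have : (2 * N : ℝ) = n := by rw [hval]; ring
        exact_mod_cast this
      omega
    · -- n ≤ 2m - 3
      have h3 : n + 3 ≤ 2 * m := by omega
      have ht : (1 : ℝ) ≤ 2 * m - n - 2 := by
        have : ((n : ℝ) + 3) ≤ 2 * m := by exact_mod_cast h3
        linarith
      set t : ℝ := 2 * m - n - 2 with hts
      have hden : (n : ℝ) - 2 * m + 2 = -t := by rw [hts]; ring
      have htne : (2 : ℝ) * (-t) ≠ 0 := by intro hc; nlinarith
      have hDeq : D = ((2 * N : ℝ) - n) * t := by
        rw [hden] at hval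
        have : D / (2 * (-t)) = (n : ℝ) / 2 - N := by linarith
        rw [div_eq_iff htne] at this
        nlinarith [this]
      have hP : (0 : ℝ) ≤ ((n : ℝ) - 2 * m) * ((n : ℝ) - 2 * m + 2) * ((n : ℝ) + 2) * n := by
        have hPeq : ((n : ℝ) - 2 * m) * ((n : ℝ) - 2 * m + 2) * ((n : ℝ) + 2) * n
            = (t + 2) * t * ((n : ℝ) + 2) * n := by rw [hts]; ring
        rw [hPeq]
        have := mul_pos (mul_pos (mul_pos (show (0:ℝ) < t + 2 by linarith)
          (show (0:ℝ) < t by linarith)) (show (0:ℝ) < (n:ℝ) + 2 by linarith))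
          (show (0:ℝ) < (n:ℝ) by linarith)
        linarith
      have hD2 : D ^ 2 = (t + 2) * t * ((n : ℝ) + 2) * n := by
        rw [hD, Real.sq_sqrt hP, hts]; ring
      have ha : (0 : ℝ) ≤ (2 * N : ℝ) - n := by
        by_contra hc
        push_neg at hc
        nlinarith [hDnn, hDeq]
      have hDle : D ≤ ((n : ℝ) - 2) * t := by
        rw [hDeq]
        exact mul_le_mul_of_nonneg_right (by linarith) (by linarith)
      have hDsq : D ^ 2 ≤ (((n : ℝ) - 2) * t) ^ 2 := by
        nlinarith [hDnn, hDle]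
      have key2 : ((n : ℝ) - 2) ^ 2 * t < (t + 2) * ((n : ℝ) + 2) * n := by
        nlinarith [ht, hn']
      have key : ((n : ℝ) - 2) ^ 2 * t * t < (t + 2) * ((n : ℝ) + 2) * n * t := by
        exact mul_lt_mul_of_pos_right key2 (by linarith)
      nlinarith [hD2, hDsq, key]
  refine ⟨?_, h2m⟩
  by_contra h
  push_neg at h
  have h3 : 3 * m ≤ n := h
  have hx : (2 : ℝ) ≤ (n : ℝ) - 2 * m := by
    have h4 : 2 * m + 2 ≤ n := by omega
    have : ((2 * m : ℕ) : ℝ) + 2 ≤ n := by exact_mod_cast h4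
    push_cast at this
    linarith
  set x : ℝ := (n : ℝ) - 2 * m with hxs
  have hn3x : (n : ℝ) ≤ 3 * x := by
    have h5 : ((3 * m : ℕ) : ℝ) ≤ n := by exact_mod_cast h3
    push_cast at h5
    rw [hxs]; linarith
  have hx2 : (0 : ℝ) < x + 2 := by linarith
  have htne : (2 : ℝ) * (x + 2) ≠ 0 := by intro hc; nlinarith
  have hDeq : D = ((n : ℝ) - 2 * N) * (x + 2) := by
    have : D / (2 * (x + 2)) = (n : ℝ) / 2 - N := by rw [hxs]; linarith
    rw [div_eq_iff htne] at this
    nlinarith [this]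
  have hP : (0 : ℝ) ≤ ((n : ℝ) - 2 * m) * ((n : ℝ) - 2 * m + 2) * ((n : ℝ) + 2) * n := by
    have := mul_pos (mul_pos (mul_pos (show (0:ℝ) < (n:ℝ) - 2*m by linarith)
      (show (0:ℝ) < (n:ℝ) - 2*m + 2 by linarith)) (show (0:ℝ) < (n:ℝ) + 2 by linarith))
      (show (0:ℝ) < (n:ℝ) by linarith)
    linarith
  have hD2 : D ^ 2 = x * (x + 2) * ((n : ℝ) + 2) * n := by
    rw [hD, Real.sq_sqrt hP, hxs]
  have ha : (0 : ℝ) ≤ (n : ℝ) - 2 * N := by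
    by_contra hc
    push_neg at hc
    nlinarith [hDnn, hDeq]
  have hDle : D ≤ ((n : ℝ) - 2) * (x + 2) := by
    rw [hDeq]
    exact mul_le_mul_of_nonneg_right (by linarith) (by linarith)
  have hDsq : D ^ 2 ≤ (((n : ℝ) - 2) * (x + 2)) ^ 2 := by
    nlinarith [hDnn, hDle]
  have key2 : ((n : ℝ) - 2) ^ 2 * (x + 2) < x * ((n : ℝ) + 2) * n := by
    nlinarith [mul_nonneg (show (0:ℝ) ≤ 3 * x - n by linarith)
      (show (0:ℝ) ≤ 6 * (n:ℝ) - 4 by linarith), hn', hx]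
  have key : ((n : ℝ) - 2) ^ 2 * (x + 2) * (x + 2) < x * ((n : ℝ) + 2) * n * (x + 2) := by
    exact mul_lt_mul_of_pos_right key2 hx2
  nlinarith [hD2, hDsq, key]
end
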